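/- arXiv:1905.12387 — 4 statements merged into one kernel-verified Lean document; each statement's English description precedes it below -/
import Mathlib

section
/- For every integer n ≥ 1, the sum, over all subsets {i_1 < i_2 < … < i_ℓ} of {1, …, n−1} (including the empty set, which contributes 1), of the number of ℓ-tuples (p_1, …, p_ℓ) of pairwise vertex-disjoint restricted Schröder paths in which p_k goes from (i_k,0) to (0, i_k + 1), equals det(I_n + M_n), where I_n is the n×n identity matrix and (M_n)_{i,j} = S̃_{i,j+1} for 0 ≤ i,j ≤ n−1. (This common value is the number T_4(𝒜_n) of quarter-turn symmetric domino tilings of the holey Aztec square 𝒜_n.) -/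
open Finset

namespace Paper20V

/-! ## Vertex-model configurations -/

/-- Raw data of a 20V configuration on the `n × n` grid: occupation of the
horizontal, vertical and diagonal inner edges (indexed zero-based; the raw
position `(a,b)` corresponds to the 1-based grid point `(a+1, b+1)`). -/
abbrev Cfg20 (n : ℕ) := (Fin n × Fin n → Bool) × (Fin n × Fin n → Bool) × (Fin n × Fin n → Bool)

/-- Read a `Fin n × Fin n`-indexed table at the 1-based position `(x, y)`. -/
def rd {n : ℕ} (f : Fin n × Fin n → Bool) (x y : ℕ) : Bool :=
  if h : x - 1 < n ∧ y - 1 < n then f (⟨x - 1, h.1⟩, ⟨y - 1, h.2⟩) else false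

/-- The raw data only uses the genuinely existing inner edges:
horizontal edges exist for `x ≤ n-1`, vertical ones for `y ≤ n-1`,
diagonal ones for `x, y ≤ n-1` (1-based). -/
def Valid20 (n : ℕ) (c : Cfg20 n) : Prop :=
  (∀ p : Fin n × Fin n, (p.1 : ℕ) + 1 = n → c.1 p = false) ∧
  (∀ p : Fin n × Fin n, (p.2 : ℕ) + 1 = n → c.2.1 p = false) ∧
  (∀ p : Fin n × Fin n, ((p.1 : ℕ) + 1 = n ∨ (p.2 : ℕ) + 1 = n) → c.2.2 p = false)

/-- Occupation of the West in-slot of the 1-based vertex `(x,y)`. -/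
def Wocc {n : ℕ} (c : Cfg20 n) (x y : ℕ) : Bool :=
  if x = 1 then true else rd c.1 (x - 1) y

/-- Occupation of the North-West in-slot of `(x,y)`; `bc2 = false` for DWBC1,
`bc2 = true` for DWBC2 (where the NW in-slot of `(1,n)` is unoccupied). -/
def NWocc (bc2 : Bool) {n : ℕ} (c : Cfg20 n) (x y : ℕ) : Bool :=
  if x = 1 then (if bc2 then decide (y ≠ n) else true)
  else if y = n then false else rd c.2.2 (x - 1) y

/-- Occupation of the North in-slot of `(x,y)`. -/
def Nocc {n : ℕ} (c : Cfg20 n) (x y : ℕ) : Bool :=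
  if y = n then false else rd c.2.1 x y

/-- Occupation of the East out-slot of `(x,y)`. -/
def Eocc {n : ℕ} (c : Cfg20 n) (x y : ℕ) : Bool :=
  if x = n then false else rd c.1 x y

/-- Occupation of the South-East out-slot of `(x,y)`; `bc2 = true` for DWBC2
(where the SE out-slot of `(n,1)` is unoccupied). -/
def SEocc (bc2 : Bool) {n : ℕ} (c : Cfg20 n) (x y : ℕ) : Bool :=
  if y = 1 then (if bc2 then decide (x ≠ n) else true)
  else if x = n then false else rd c.2.2 x (y - 1)

/-- Occupation of the South out-slot of `(x,y)`. -/
def Socc {n : ℕ} (c : Cfg20 n) (x y : ℕ) : Bool :=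
  if y = 1 then true else rd c.2.1 x (y - 1)

/-- A 20V configuration with DWBC1 (`bc2 = false`) or DWBC2 (`bc2 = true`):
at every vertex the number of occupied in-slots is the number of occupied
out-slots. -/
def IsCfg20 (bc2 : Bool) (n : ℕ) (c : Cfg20 n) : Prop :=
  Valid20 n c ∧ ∀ x ∈ Icc 1 n, ∀ y ∈ Icc 1 n,
    (Wocc c x y).toNat + (NWocc bc2 c x y).toNat + (Nocc c x y).toNat =
    (Eocc c x y).toNat + (SEocc bc2 c x y).toNat + (Socc c x y).toNat

/-- Number of occupied inner vertical edges in the last column `x = n`. -/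
def vcount20 {n : ℕ} (c : Cfg20 n) : ℕ := ∑ y ∈ Icc 1 (n - 1), (rd c.2.1 n y).toNat

/-- The number of 20V configurations with DWBC1 resp. DWBC2. -/
noncomputable def Z20 (bc2 : Bool) (n : ℕ) : ℕ := Nat.card {c : Cfg20 n // IsCfg20 bc2 n c}

/-- Refined 20V partition function `Σ_C τ^{v(C)}`. -/
noncomputable def Zhat20 (bc2 : Bool) (n : ℕ) (τ : ℂ) : ℂ :=
  ∑ᶠ c : {c : Cfg20 n // IsCfg20 bc2 n c}, τ ^ vcount20 c.1

/-- Number of 20V configurations with `v(C) = ℓ - 1`. -/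
noncomputable def Z20ref (bc2 : Bool) (n ℓ : ℕ) : ℕ :=
  Nat.card {c : Cfg20 n // IsCfg20 bc2 n c ∧ vcount20 c = ℓ - 1}

/-- Raw data of a 6V configuration: horizontal and vertical inner edges. -/
abbrev Cfg6 (n : ℕ) := (Fin n × Fin n → Bool) × (Fin n × Fin n → Bool)

def Valid6 (n : ℕ) (c : Cfg6 n) : Prop :=
  (∀ p : Fin n × Fin n, (p.1 : ℕ) + 1 = n → c.1 p = false) ∧
  (∀ p : Fin n × Fin n, (p.2 : ℕ) + 1 = n → c.2 p = false)

def W6 {n : ℕ} (c : Cfg6 n) (x y : ℕ) : Bool := if x = 1 then true else rd c.1 (x - 1) y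
def N6 {n : ℕ} (c : Cfg6 n) (x y : ℕ) : Bool := if y = n then false else rd c.2 x y
def E6 {n : ℕ} (c : Cfg6 n) (x y : ℕ) : Bool := if x = n then false else rd c.1 x y
def S6 {n : ℕ} (c : Cfg6 n) (x y : ℕ) : Bool := if y = 1 then true else rd c.2 x (y - 1)

/-- A 6V configuration with domain wall boundary conditions. -/
def Is6V (n : ℕ) (c : Cfg6 n) : Prop :=
  Valid6 n c ∧ ∀ x ∈ Icc 1 n, ∀ y ∈ Icc 1 n,
    (W6 c x y).toNat + (N6 c x y).toNat = (E6 c x y).toNat + (S6 c x y).toNat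

/-- Number of vertices whose occupied slots are exactly `{W,E}` or exactly `{N,S}`. -/
def bcount {n : ℕ} (c : Cfg6 n) : ℕ :=
  ∑ x ∈ Icc 1 n, ∑ y ∈ Icc 1 n,
    ((W6 c x y && E6 c x y && !N6 c x y && !S6 c x y) ||
     (N6 c x y && S6 c x y && !W6 c x y && !E6 c x y)).toNat

/-- Number of occupied inner vertical edges in the last column `x = n`. -/
def vcount6 {n : ℕ} (c : Cfg6 n) : ℕ := ∑ y ∈ Icc 1 (n - 1), (rd c.2 n y).toNat

/-- The 6V-DWBC partition function with weights `(1, √2, 1)`. -/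
noncomputable def Z6V (n : ℕ) : ℝ :=
  ∑ᶠ c : {c : Cfg6 n // Is6V n c}, Real.sqrt 2 ^ bcount c.1

/-- The refined 6V-DWBC partition function `Σ_C (√2)^{b(C)} σ^{v(C)}`. -/
noncomputable def Zhat6V (n : ℕ) (σ : ℂ) : ℂ :=
  ∑ᶠ c : {c : Cfg6 n // Is6V n c}, (Real.sqrt 2 : ℂ) ^ bcount c.1 * σ ^ vcount6 c.1

/-- `Z^{6V}_m`: the `(√2)^{b}`-weighted number of 6V-DWBC configurations with
`v(C) = m - 1`. -/
noncomputable def Z6Vref (n m : ℕ) : ℝ :=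
  ∑ᶠ c : {c : Cfg6 n // Is6V n c ∧ vcount6 c = m - 1}, Real.sqrt 2 ^ bcount c.1

/-! ## Schröder paths -/

/-- A single Schröder step: `(-1,0)`, `(0,1)` or `(-1,1)`. -/
def SchStep (p q : ℤ × ℤ) : Prop :=
  q = (p.1 - 1, p.2) ∨ q = (p.1, p.2 + 1) ∨ q = (p.1 - 1, p.2 + 1)

/-- A Schröder path from `(i,0)` to `(0,j)`. -/
def IsSch (P : List (ℤ × ℤ)) (i j : ℕ) : Prop :=
  P ≠ [] ∧ P.head? = some ((i : ℤ), 0) ∧ P.getLast? = some (0, (j : ℤ)) ∧ P.Chain' SchStep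

/-- A restricted Schröder path: the last step is not the up step `(0,1)`. -/
def IsRSch (P : List (ℤ × ℤ)) (i j : ℕ) : Prop :=
  IsSch P i j ∧ ∀ a b : ℤ × ℤ, [a, b] <:+ P → b ≠ (a.1, a.2 + 1)

/-- `S̃_{i,j}`: the number of restricted Schröder paths from `(i,0)` to `(0,j)`. -/
noncomputable def Stilde (i j : ℕ) : ℕ := Nat.card {P : List (ℤ × ℤ) // IsRSch P i j}

/-- A valid family of pairwise vertex-disjoint restricted Schröder paths indexed
by the finite set `F`: for `k ∈ F` the path `p k` goes from `(k,0)` to `(0,k+1)`,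
and for `k ∉ F` we set `p k = []`. -/
def FamValid (F : Finset ℕ) (p : ℕ → List (ℤ × ℤ)) : Prop :=
  (∀ k ∈ F, IsRSch (p k) k (k + 1)) ∧
  (∀ k, k ∉ F → p k = []) ∧
  (∀ k ∈ F, ∀ l ∈ F, k ≠ l → ∀ q ∈ p k, q ∉ p l)

/-- Number of `(-1,0)` steps of `P` taken at height `y = m`. -/
def hStepsAt (m : ℤ) (P : List (ℤ × ℤ)) : ℕ :=
  (P.zip P.tail).countP fun q => decide (q.2 = (q.1.1 - 1, q.1.2) ∧ q.1.2 = m)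

/-- Number of `(-1,1)` steps of `P` arriving at height `y = m`. -/
def dStepsTo (m : ℤ) (P : List (ℤ × ℤ)) : ℕ :=
  (P.zip P.tail).countP fun q => decide (q.2 = (q.1.1 - 1, q.1.2 + 1) ∧ q.2.2 = m)

/-! ## Power series -/

/-- The variable `r` of `ℂ[[r,s]]`. -/
noncomputable def Pr : MvPowerSeries (Fin 2) ℂ := MvPowerSeries.X 0
/-- The variable `s` of `ℂ[[r,s]]`. -/
noncomputable def Ps : MvPowerSeries (Fin 2) ℂ := MvPowerSeries.X 1
/-- Constants in `ℂ[[r,s]]`. -/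
noncomputable def Pc (z : ℂ) : MvPowerSeries (Fin 2) ℂ := MvPowerSeries.C (σ := Fin 2) (R := ℂ) z
/-- The coefficient of `r^a s^b`. -/
noncomputable def cf (a b : ℕ) (F : MvPowerSeries (Fin 2) ℂ) : ℂ :=
  MvPowerSeries.coeff (σ := Fin 2) (R := ℂ) (Finsupp.single 0 a + Finsupp.single 1 b) F

/-- The generating function `1/(1-rs) + 2r/((1-r)(1-r-s-rs))` of `I + M`. -/
noncomputable def Gfun : MvPowerSeries (Fin 2) ℂ :=
  (1 - Pr * Ps)⁻¹ + 2 * Pr * ((1 - Pr) * (1 - Pr - Ps - Pr * Ps))⁻¹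

/-- `1/(1-rs) + 2τr/((1-τr)(1-r-s-rs))`: type-1 last column. -/
noncomputable def Gfun1 (τ : ℂ) : MvPowerSeries (Fin 2) ℂ :=
  (1 - Pr * Ps)⁻¹ + 2 * Pc τ * Pr * ((1 - Pc τ * Pr) * (1 - Pr - Ps - Pr * Ps))⁻¹

/-- `1/(1-rs) + (1+τ)r/((1-τr)(1-r-s-rs))`: type-2 last column. -/
noncomputable def Gfun2 (τ : ℂ) : MvPowerSeries (Fin 2) ℂ :=
  (1 - Pr * Ps)⁻¹ + (1 + Pc τ) * Pr * ((1 - Pc τ * Pr) * (1 - Pr - Ps - Pr * Ps))⁻¹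

end Paper20V

namespace Paper20V

/-- Combined monotonicity along a Schröder path. -/
def Mono (u v : ℤ × ℤ) : Prop := v.1 ≤ u.1 ∧ u.2 ≤ v.2 ∧ u.2 - u.1 < v.2 - v.1

lemma SchStep.mono {u v : ℤ × ℤ} (h : SchStep u v) : Mono u v := by
  rcases h with h | h | h <;> subst h <;> refine ⟨?_, ?_, ?_⟩ <;> simp [Mono] <;> omega

lemma Mono.trans {u v w : ℤ × ℤ} (h1 : Mono u v) (h2 : Mono v w) : Mono u w := by
  obtain ⟨a1, b1, c1⟩ := h1; obtain ⟨a2, b2, c2⟩ := h2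
  exact ⟨le_trans a2 a1, le_trans b1 b2, lt_trans c1 c2⟩

instance : IsTrans (ℤ × ℤ) Mono := ⟨fun _ _ _ => Mono.trans⟩

lemma Mono.ne {u v : ℤ × ℤ} (h : Mono u v) : u ≠ v := by
  rintro rfl; exact absurd h.2.2 (lt_irrefl _)

lemma chain_pairwise {P : List (ℤ × ℤ)} (h : P.Chain' SchStep) : P.Pairwise Mono :=
  List.isChain_iff_pairwise.mp (List.IsChain.imp (fun _ _ hs => hs.mono) h)

lemma IsSch.pairwise {P : List (ℤ × ℤ)} {i j : ℕ} (h : IsSch P i j) : P.Pairwise Mono :=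
  chain_pairwise h.2.2.2

lemma IsSch.nodup {P : List (ℤ × ℤ)} {i j : ℕ} (h : IsSch P i j) : P.Nodup :=
  h.pairwise.imp Mono.ne

/-- Every element not equal to the last is `Mono`-below it. -/
lemma pairwise_getLast? {P : List (ℤ × ℤ)} (hpw : P.Pairwise Mono) {e : ℤ × ℤ}
    (hl : P.getLast? = some e) {u : ℤ × ℤ} (hu : u ∈ P) : u = e ∨ Mono u e := by
  have hne : P ≠ [] := by rintro rfl; simp at hl
  have hsplit : P.dropLast ++ [P.getLast hne] = P := List.dropLast_append_getLast hne
  have he : P.getLast hne = e := by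
    have h2 := List.getLast?_eq_getLast hne; rw [h2, Option.some_inj] at hl; exact hl
  rw [← hsplit] at hpw hu
  rw [List.pairwise_append] at hpw
  rcases List.mem_append.mp hu with h | h
  · exact Or.inr (he ▸ hpw.2.2 u h _ (List.mem_singleton_self _))
  · left; rw [List.mem_singleton.mp h, he]

lemma pairwise_head? {P : List (ℤ × ℤ)} (hpw : P.Pairwise Mono) {h0 : ℤ × ℤ}
    (hh : P.head? = some h0) {u : ℤ × ℤ} (hu : u ∈ P) : u = h0 ∨ Mono h0 u := by
  cases P with
  | nil => simp at hh
  | cons a t =>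
    simp only [List.head?_cons, Option.some.injEq] at hh
    subst hh
    rcases List.mem_cons.mp hu with rfl | h
    · exact Or.inl rfl
    · exact Or.inr ((List.pairwise_cons.mp hpw).1 u h)

/-- All points of a Schröder path lie in the box `[0,i] × [0,j]`. -/
lemma IsSch.mem_box {P : List (ℤ × ℤ)} {i j : ℕ} (h : IsSch P i j) {u : ℤ × ℤ}
    (hu : u ∈ P) : 0 ≤ u.1 ∧ u.1 ≤ (i : ℤ) ∧ 0 ≤ u.2 ∧ u.2 ≤ (j : ℤ) := by
  have hpw := h.pairwise
  have h1 := pairwise_head? hpw h.2.1 hu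
  have h2 := pairwise_getLast? hpw h.2.2.1 hu
  have hA : u.1 ≤ (i : ℤ) ∧ 0 ≤ u.2 := by
    rcases h1 with rfl | h1
    · exact ⟨le_refl _, le_refl _⟩
    · obtain ⟨a, b, -⟩ := h1; exact ⟨a, b⟩
  have hB : 0 ≤ u.1 ∧ u.2 ≤ (j : ℤ) := by
    rcases h2 with rfl | h2
    · exact ⟨le_refl _, le_refl _⟩
    · obtain ⟨a, b, -⟩ := h2; exact ⟨a, b⟩
  exact ⟨hB.1, hA.1, hA.2, hB.2⟩

end Paper20V

namespace Paper20V

lemma suffix_getLast? {α : Type*} {l₁ l₂ : List α} (h : l₁ <:+ l₂) (hne : l₁ ≠ []) :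
    l₂.getLast? = l₁.getLast? := by
  obtain ⟨t, rfl⟩ := h
  rw [List.getLast?_append]
  cases e : l₁.getLast? with
  | none => exact absurd (List.getLast?_eq_none_iff.mp e) hne
  | some b => rfl

lemma exists_lastTwo {α : Type*} (P : List α) (h : 2 ≤ P.length) :
    ∃ a b, [a, b] <:+ P ∧ P.getLast? = some b := by
  have hl : (P.drop (P.length - 2)).length = 2 := by rw [List.length_drop]; omega
  rcases e : P.drop (P.length - 2) with _ | ⟨a, _ | ⟨b, _ | ⟨c, t⟩⟩⟩ <;>
    rw [e] at hl <;> simp at hl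
  have hsuf : [a, b] <:+ P := e ▸ List.drop_suffix _ _
  refine ⟨a, b, hsuf, ?_⟩
  rw [suffix_getLast? hsuf (by simp)]; rfl

lemma suffix_pair_of_suffix_append {α : Type*} {a b : α} {s t : List α}
    (h : [a, b] <:+ s ++ t) (ht : 2 ≤ t.length) : [a, b] <:+ t := by
  obtain ⟨u, hu⟩ := h
  have hlen : u.length + 2 = s.length + t.length := by
    have := congrArg List.length hu; simpa using this
  have h1 : [a, b] = (s ++ t).drop u.length := by
    rw [← hu, List.drop_left]
  have h2 : (s ++ t).drop u.length = t.drop (t.length - 2) := by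
    have : u.length = s.length + (t.length - 2) := by omega
    rw [this, List.drop_append, List.drop_eq_nil_of_le (by omega), Nat.add_sub_cancel_left, List.nil_append]
  rw [h1, h2]; exact List.drop_suffix _ _

/-- Along a restricted Schröder path, a point with `x = 0` is the last point. -/
lemma IsRSch.eq_last_of_fst_eq_zero {P : List (ℤ × ℤ)} {i j : ℕ} (h : IsRSch P i j)
    {v : ℤ × ℤ} (hv : v ∈ P) (hx : v.1 = 0) : v = (0, (j : ℤ)) := by
  obtain ⟨⟨hne, hh, hl, hc⟩, hres⟩ := h
  have hpw : P.Pairwise Mono := chain_pairwise hc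
  have hbox : ∀ u ∈ P, 0 ≤ u.1 := fun u hu => (IsSch.mem_box ⟨hne, hh, hl, hc⟩ hu).1
  set S := P.dropWhile (fun u => decide (u ≠ v)) with hS
  have hsuf : S <:+ P := ⟨P.takeWhile (fun u => decide (u ≠ v)), List.takeWhile_append_dropWhile⟩
  have hSne : S ≠ [] := by
    intro hnil
    have := List.dropWhile_eq_nil_iff.mp hnil v hv
    simp at this
  have hhead : S.head? = some v := by
    cases e : S.head? with
    | none => exact absurd (List.head?_eq_none_iff.mp e) hSne
    | some u =>
      have := List.head?_dropWhile_not (fun u => decide (u ≠ v)) P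
      rw [← hS, e] at this
      simp at this
      rw [this]
  -- every element of S has x = 0
  have hSx : ∀ u ∈ S, u.1 = 0 := by
    intro u hu
    have hpwS : S.Pairwise Mono := hpw.sublist hsuf.sublist
    rcases pairwise_head? hpwS hhead hu with rfl | hm
    · exact hx
    · have h1 : u.1 ≤ v.1 := hm.1
      have h2 : 0 ≤ u.1 := hbox u (hsuf.subset hu)
      omega
  by_cases hlen : 2 ≤ S.length
  · exfalso
    obtain ⟨a, b, hab, hlast⟩ := exists_lastTwo S hlen
    have habP : [a, b] <:+ P := hab.trans hsuf
    have hstep : SchStep a b := by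
      have := hc.suffix habP
      exact (List.isChain_cons_cons.mp this).1
    have ha : a.1 = 0 := hSx a (hab.subset (by simp))
    have hb : b.1 = 0 := hSx b (hab.subset (by simp))
    rcases hstep with hs | hs | hs
    · rw [hs] at hb; simp at hb; omega
    · exact hres a b habP hs
    · rw [hs] at hb; simp at hb; omega
  · -- S = [v], so v is the last point of P
    have : S = [v] := by
      rcases S with _ | ⟨u, _ | ⟨w, t⟩⟩
      · exact absurd rfl hSne
      · simp only [List.head?_cons, Option.some_inj] at hhead; rw [hhead]
      · exfalso; simp at hlen
    have hlastP : P.getLast? = some v := by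
      rw [suffix_getLast? hsuf hSne, this]; rfl
    rw [hlastP, Option.some_inj] at hl
    exact hl

/-- Finiteness of the set of restricted Schröder paths. -/
lemma finite_rsch (i j : ℕ) : {P : List (ℤ × ℤ) | IsRSch P i j}.Finite := by
  classical
  set B : Finset (ℤ × ℤ) := Finset.Icc (0, 0) ((i : ℤ), (j : ℤ)) with hB
  have hfin : {l : List {x // x ∈ B} | l.length ≤ B.card}.Finite := List.finite_length_le _ _
  have himg := hfin.image (List.map Subtype.val)
  apply Set.Finite.subset himg
  rintro P hP
  have hmem : ∀ u ∈ P, u ∈ B := by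
    intro u hu
    obtain ⟨h1, h2, h3, h4⟩ := hP.1.mem_box hu
    rw [hB, Finset.mem_Icc]
    constructor <;> constructor <;> simpa
  have hnd : P.Nodup := hP.1.nodup
  refine ⟨P.attach.map fun x => (⟨x.1, hmem x.1 x.2⟩ : {x // x ∈ B}), ?_, ?_⟩
  · simp only [Set.mem_setOf_eq, List.length_map, List.length_attach]
    calc P.length = P.toFinset.card := (List.toFinset_card_of_nodup hnd).symm
    _ ≤ B.card := Finset.card_le_card (by intro x hx; exact hmem x (List.mem_toFinset.mp hx))
  · simp [List.map_map]
    exact List.attach_map_subtype_val P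

/-- The finite set of restricted Schröder paths from `(i,0)` to `(0,j)`. -/
noncomputable def PF (i j : ℕ) : Finset (List (ℤ × ℤ)) := (finite_rsch i j).toFinset

lemma mem_PF {P : List (ℤ × ℤ)} {i j : ℕ} : P ∈ PF i j ↔ IsRSch P i j := by
  simp [PF, Set.Finite.mem_toFinset, Set.mem_setOf_eq]

lemma Stilde_eq_card_PF (i j : ℕ) : Stilde i j = (PF i j).card := by
  rw [Stilde]
  have e : {P : List (ℤ × ℤ) // IsRSch P i j} ≃ {P // P ∈ PF i j} :=
    Equiv.subtypeEquivRight fun P => (mem_PF).symm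
  rw [Nat.card_congr e, Nat.card_eq_fintype_card, Fintype.card_coe]

lemma Stilde_zero (j : ℕ) (hj : 1 ≤ j) : Stilde 0 j = 0 := by
  rw [Stilde_eq_card_PF, Finset.card_eq_zero, Finset.eq_empty_iff_forall_notMem]
  intro P hP
  rw [mem_PF] at hP
  have hh : P.head? = some (0, 0) := by simpa using hP.1.2.1
  have hhm : (0, (0:ℤ)) ∈ P := by
    cases P with
    | nil => simp at hh
    | cons a t => simp only [List.head?_cons, Option.some_inj] at hh; rw [← hh]; simp
  have := hP.eq_last_of_fst_eq_zero hhm rfl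
  simp [Prod.ext_iff] at this
  omega

end Paper20V

namespace Paper20V

lemma mem_of_head? {α : Type*} {l : List α} {a : α} (h : l.head? = some a) : a ∈ l := by
  cases l with
  | nil => simp at h
  | cons x t => simp only [List.head?_cons, Option.some_inj] at h; rw [← h]; simp

lemma mem_of_getLast? {α : Type*} {l : List α} {a : α} (h : l.getLast? = some a) : a ∈ l := by
  have hne : l ≠ [] := by rintro rfl; simp at h
  have := List.getLast?_eq_getLast hne
  rw [this, Option.some_inj] at h
  rw [← h]; exact List.getLast_mem hne

/-- Comparison across heights: a point of higher height is weakly to the left. -/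
lemma pair_compare {P : List (ℤ × ℤ)} (hpw : P.Pairwise Mono) {w₁ w₂ : ℤ × ℤ}
    (h1 : w₁ ∈ P) (h2 : w₂ ∈ P) (hy : w₁.2 < w₂.2) : w₂.1 ≤ w₁.1 := by
  have hsym : Symmetric (fun u v : ℤ × ℤ =>
      (u.2 < v.2 → v.1 ≤ u.1) ∧ (v.2 < u.2 → u.1 ≤ v.1)) := by
    intro u v h; exact ⟨h.2, h.1⟩
  have hpw' : P.Pairwise (fun u v : ℤ × ℤ =>
      (u.2 < v.2 → v.1 ≤ u.1) ∧ (v.2 < u.2 → u.1 ≤ v.1)) := by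
    refine hpw.imp ?_
    intro u v hm
    exact ⟨fun _ => hm.1, fun hlt => absurd (lt_of_le_of_lt hm.2.1 hlt) (lt_irrefl _)⟩
  by_cases he : w₁ = w₂
  · rw [he]
  · exact (haveI : Std.Symm (fun u v : ℤ × ℤ =>
        (u.2 < v.2 → v.1 ≤ u.1) ∧ (v.2 < u.2 → u.1 ≤ v.1)) := ⟨fun _ _ h => hsym h⟩
      hpw'.forall h1 h2 he).1 hy

/-- Intermediate value for heights along a Schröder chain. -/
lemma height_iv : ∀ (P : List (ℤ × ℤ)), P.Chain' SchStep →
    ∀ h₀ e : ℤ × ℤ, P.head? = some h₀ → P.getLast? = some e →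
    ∀ m : ℤ, h₀.2 ≤ m → m ≤ e.2 → ∃ w ∈ P, w.2 = m := by
  intro P
  induction P with
  | nil => intro _ h₀ e hh; simp at hh
  | cons x t ih =>
    intro hc h₀ e hh hl m hm1 hm2
    simp only [List.head?_cons, Option.some_inj] at hh
    subst hh
    cases t with
    | nil =>
      simp only [List.getLast?_singleton, Option.some_inj] at hl
      subst hl
      exact ⟨x, by simp, le_antisymm hm1 hm2⟩
    | cons y t' =>
      by_cases hx : m = x.2
      · exact ⟨x, by simp, hx.symm⟩
      · have hlt : x.2 < m := lt_of_le_of_ne hm1 (Ne.symm hx)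
        have hstep : SchStep x y := (List.isChain_cons_cons.mp hc).1
        have hy : y.2 ≤ x.2 + 1 := by
          rcases hstep with hs | hs | hs <;> rw [hs] <;> simp
        have hl' : (y :: t').getLast? = some e := by
          rw [← hl]; symm
          exact suffix_getLast? (List.suffix_cons x (y :: t')) (by simp)
        obtain ⟨w, hw, hwm⟩ := ih (List.isChain_cons_cons.mp hc).2 y e rfl hl' m (by omega) hm2
        exact ⟨w, by simp [hw], hwm⟩

/-- The crossing lemma: interleaved Schröder paths share a vertex. -/
lemma crossing {P Q : List (ℤ × ℤ)} {a b c d : ℕ} (hP : IsSch P a b) (hQ : IsSch Q c d)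
    (hac : a < c) (hdb : d ≤ b) : ∃ v ∈ P, v ∈ Q := by
  by_contra hcon
  push_neg at hcon
  have hpwP := hP.pairwise
  have hpwQ := hQ.pairwise
  have hPx : ∀ w ∈ P, 0 ≤ w.1 := fun w hw => (hP.mem_box hw).1
  obtain ⟨hPne, hPh, hPl, hPc⟩ := hP
  obtain ⟨hQne, hQh, hQl, hQc⟩ := hQ
  have hQbound : ∀ w ∈ Q, 0 ≤ w.2 ∧ w.2 ≤ (b : ℤ) := by
    intro w hw
    refine ⟨?_, ?_⟩
    · rcases pairwise_head? hpwQ hQh hw with rfl | hm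
      · simp
      · simpa using hm.2.1
    · have hwd : w.2 ≤ (d : ℤ) := by
        rcases pairwise_getLast? hpwQ hQl hw with rfl | hm
        · simp
        · simpa using hm.2.1
      calc w.2 ≤ (d : ℤ) := hwd
        _ ≤ (b : ℤ) := by exact_mod_cast hdb
  have hIV : ∀ m : ℤ, 0 ≤ m → m ≤ (b : ℤ) → ∃ w ∈ P, w.2 = m := by
    intro m h1 h2
    exact height_iv P hPc _ _ hPh hPl m (by simpa using h1) (by simpa using h2)
  set Inv : ℤ × ℤ → Prop := fun q => ∀ w ∈ P, w.2 = q.2 → w.1 < q.1 with hInvdef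
  have hstepInv : ∀ x y : ℤ × ℤ, x ∈ Q → y ∈ Q → SchStep x y → Inv x → Inv y := by
    intro x y hxQ hyQ hs hIx
    have hxb := hQbound x hxQ
    rcases hs with hs | hs | hs
    · subst hs
      intro w hwP hwy
      simp only at hwy
      have h1 : w.1 < x.1 := hIx w hwP hwy
      have hne : w.1 ≠ x.1 - 1 := by
        intro he
        exact hcon w hwP ((Prod.ext he hwy : w = (x.1 - 1, x.2)) ▸ hyQ)
      simp only
      omega
    · subst hs
      intro w hwP hwy
      simp only at hwy
      obtain ⟨u, huP, hu2⟩ := hIV x.2 hxb.1 hxb.2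
      have hcmp : w.1 ≤ u.1 := pair_compare hpwP huP hwP (by omega)
      have h1 : u.1 < x.1 := hIx u huP hu2
      simp only
      omega
    · subst hs
      intro w hwP hwy
      simp only at hwy
      obtain ⟨u, huP, hu2⟩ := hIV x.2 hxb.1 hxb.2
      have hcmp : w.1 ≤ u.1 := pair_compare hpwP huP hwP (by omega)
      have h1 : u.1 < x.1 := hIx u huP hu2
      have hne : w.1 ≠ x.1 - 1 := by
        intro he
        exact hcon w hwP ((Prod.ext he hwy : w = (x.1 - 1, x.2 + 1)) ▸ hyQ)
      simp only
      omega
  have hprop : ∀ (L : List (ℤ × ℤ)), (∀ w ∈ L, w ∈ Q) → L.Chain' SchStep →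
      ∀ q₀, L.head? = some q₀ → Inv q₀ → ∀ w ∈ L, Inv w := by
    intro L
    induction L with
    | nil => intro _ _ _ _ _ w hw; simp at hw
    | cons x t ih =>
      intro hsub hc q₀ hh hI w hw
      simp only [List.head?_cons, Option.some_inj] at hh
      subst hh
      rcases List.mem_cons.mp hw with rfl | hw'
      · exact hI
      · cases t with
        | nil => simp at hw'
        | cons y t' =>
          have hiy : Inv y :=
            hstepInv x y (hsub x (by simp)) (hsub y (by simp)) (List.isChain_cons_cons.mp hc).1 hI
          exact ih (fun u hu => hsub u (by simp [hu])) (List.isChain_cons_cons.mp hc).2 y rfl hiy w hw'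
  have hstart : Inv ((c : ℤ), (0 : ℤ)) := by
    intro w hwP hw2
    rcases pairwise_head? hpwP hPh hwP with rfl | hm
    · simp only; exact_mod_cast hac
    · have : w.1 ≤ (a : ℤ) := by simpa using hm.1
      simp only
      calc w.1 ≤ (a : ℤ) := this
        _ < (c : ℤ) := by exact_mod_cast hac
  have hInvLast : Inv ((0 : ℤ), (d : ℤ)) :=
    hprop Q (fun _ h => h) hQc _ hQh hstart _ (mem_of_getLast? hQl)
  obtain ⟨w, hwP, hw2⟩ := hIV (d : ℤ) (by positivity) (by exact_mod_cast hdb)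
  have h1 : w.1 < 0 := hInvLast w hwP hw2
  have h2 : 0 ≤ w.1 := hPx w hwP
  omega

end Paper20V

namespace Paper20V

/-- The predicate "not equal to `v`". -/
def nev (v : ℤ × ℤ) : ℤ × ℤ → Bool := fun u => decide (u ≠ v)

/-- Tail swap at the vertex `v`: initial segment of `P` followed by the tail of `Q`. -/
def SW (v : ℤ × ℤ) (P Q : List (ℤ × ℤ)) : List (ℤ × ℤ) :=
  P.takeWhile (nev v) ++ Q.dropWhile (nev v)

lemma dw_ne_nil {v : ℤ × ℤ} {Q : List (ℤ × ℤ)} (h : v ∈ Q) : Q.dropWhile (nev v) ≠ [] := by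
  intro hnil
  have := List.dropWhile_eq_nil_iff.mp hnil v h
  simp [nev] at this

lemma dw_head {v : ℤ × ℤ} {Q : List (ℤ × ℤ)} (h : v ∈ Q) :
    (Q.dropWhile (nev v)).head? = some v := by
  cases e : (Q.dropWhile (nev v)).head? with
  | none => exact absurd (List.head?_eq_none_iff.mp e) (dw_ne_nil h)
  | some u =>
    have := List.head?_dropWhile_not (nev v) Q
    rw [e] at this
    simp [nev] at this
    rw [this]

lemma tw_not_mem {v : ℤ × ℤ} {P : List (ℤ × ℤ)} : v ∉ P.takeWhile (nev v) := by
  intro h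
  have := List.mem_takeWhile_imp h
  simp [nev] at this

lemma tw_all {v : ℤ × ℤ} {P : List (ℤ × ℤ)} {u : ℤ × ℤ} (h : u ∈ P.takeWhile (nev v)) :
    u ≠ v := by
  have := List.mem_takeWhile_imp h
  simpa [nev] using this

lemma dw_suffix (v : ℤ × ℤ) (Q : List (ℤ × ℤ)) : Q.dropWhile (nev v) <:+ Q :=
  ⟨Q.takeWhile (nev v), List.takeWhile_append_dropWhile⟩

lemma v_mem_dw {v : ℤ × ℤ} {Q : List (ℤ × ℤ)} (h : v ∈ Q) : v ∈ Q.dropWhile (nev v) :=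
  mem_of_head? (dw_head h)

lemma v_mem_SW {v : ℤ × ℤ} {Q : List (ℤ × ℤ)} (P : List (ℤ × ℤ)) (h : v ∈ Q) :
    v ∈ SW v P Q :=
  List.mem_append.mpr (Or.inr (v_mem_dw h))

/-- `takeWhile` of an append whose first part is all-true and second part starts false. -/
lemma takeWhile_append_of {α : Type*} {p : α → Bool} :
    ∀ {s t : List α}, (∀ u ∈ s, p u = true) → (∀ x, t.head? = some x → p x = false) →
    (s ++ t).takeWhile p = s := by
  intro s
  induction s with
  | nil =>
    intro t _ ht
    cases t with
    | nil => rfl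
    | cons x t' =>
      simp only [List.nil_append, List.takeWhile_cons, ht x rfl]
      simp
  | cons a s' ih =>
    intro t hs ht
    simp only [List.cons_append, List.takeWhile_cons, hs a (by simp)]
    rw [ih (fun u hu => hs u (by simp [hu])) ht]
    simp

lemma dropWhile_append_of {α : Type*} {p : α → Bool} :
    ∀ {s t : List α}, (∀ u ∈ s, p u = true) → (∀ x, t.head? = some x → p x = false) →
    (s ++ t).dropWhile p = t := by
  intro s
  induction s with
  | nil =>
    intro t _ ht
    cases t with
    | nil => rfl
    | cons x t' =>
      simp only [List.nil_append, List.dropWhile_cons, ht x rfl]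
      simp
  | cons a s' ih =>
    intro t hs ht
    simp only [List.cons_append, List.dropWhile_cons, hs a (by simp)]
    simp only [if_pos]
    rw [ih (fun u hu => hs u (by simp [hu])) ht]

lemma SW_takeWhile {v : ℤ × ℤ} {P Q : List (ℤ × ℤ)} (hQ : v ∈ Q) :
    (SW v P Q).takeWhile (nev v) = P.takeWhile (nev v) := by
  apply takeWhile_append_of
  · intro u hu
    have := tw_all hu
    simp [nev, this]
  · intro x hx
    rw [dw_head hQ, Option.some_inj] at hx
    simp [nev, hx]

lemma SW_dropWhile {v : ℤ × ℤ} {P Q : List (ℤ × ℤ)} (hQ : v ∈ Q) :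
    (SW v P Q).dropWhile (nev v) = Q.dropWhile (nev v) := by
  apply dropWhile_append_of
  · intro u hu
    have := tw_all hu
    simp [nev, this]
  · intro x hx
    rw [dw_head hQ, Option.some_inj] at hx
    simp [nev, hx]

/-- Swapping twice gives back the original path. -/
lemma SW_SW {v : ℤ × ℤ} {P Q : List (ℤ × ℤ)} (hP : v ∈ P) (hQ : v ∈ Q) :
    SW v (SW v P Q) (SW v Q P) = P := by
  unfold SW
  rw [show (P.takeWhile (nev v) ++ Q.dropWhile (nev v)) = SW v P Q from rfl,
    show (Q.takeWhile (nev v) ++ P.dropWhile (nev v)) = SW v Q P from rfl,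
    SW_takeWhile hQ, SW_dropWhile hP]
  exact List.takeWhile_append_dropWhile

/-- The swap of two Schröder paths through a common vertex is a Schröder path. -/
lemma SW_isSch {v : ℤ × ℤ} {P Q : List (ℤ × ℤ)} {a b c d : ℕ}
    (hPs : IsSch P a b) (hQs : IsSch Q c d) (hP : v ∈ P) (hQ : v ∈ Q) :
    IsSch (SW v P Q) a d := by
  obtain ⟨hPne, hPh, hPl, hPc⟩ := hPs
  obtain ⟨hQne, hQh, hQl, hQc⟩ := hQs
  refine ⟨?_, ?_, ?_, ?_⟩
  · intro hnil
    rw [SW, List.append_eq_nil_iff] at hnil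
    exact dw_ne_nil hQ hnil.2
  · -- head
    rw [SW]
    cases e : P.takeWhile (nev v) with
    | nil =>
      have hPdw : P.dropWhile (nev v) = P := by
        conv_rhs => rw [← List.takeWhile_append_dropWhile (p := nev v) (l := P)]
        rw [e, List.nil_append]
      have : P.head? = some v := by rw [← hPdw]; exact dw_head hP
      rw [this, Option.some_inj] at hPh
      simp only [List.nil_append]
      rw [dw_head hQ, hPh]
    | cons x s =>
      have h1 : (x :: s ++ Q.dropWhile (nev v)).head? = some x := rfl
      rw [h1]
      have : P.head? = some x := by
        conv_lhs => rw [← List.takeWhile_append_dropWhile (p := nev v) (l := P)]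
        rw [e]; rfl
      rw [this] at hPh
      exact hPh
  · -- last
    rw [SW, List.getLast?_append]
    have : (Q.dropWhile (nev v)).getLast? = some (0, (d : ℤ)) := by
      rw [← suffix_getLast? (dw_suffix v Q) (dw_ne_nil hQ)]
      exact hQl
    rw [this]; rfl
  · -- chain
    rw [SW]; change List.IsChain _ _; rw [List.isChain_append]
    refine ⟨hPc.prefix (List.takeWhile_prefix _), hQc.suffix (dw_suffix v Q), ?_⟩
    intro x hx y hy
    rw [dw_head hQ] at hy
    rw [Option.mem_def, Option.some_inj] at hy
    subst hy
    -- the step from the last of the initial segment to v, inside P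
    have hPc' : List.Chain' SchStep (P.takeWhile (nev v) ++ P.dropWhile (nev v)) := by
      rw [List.takeWhile_append_dropWhile]; exact hPc
    change List.IsChain _ _ at hPc'; rw [List.isChain_append] at hPc'
    exact hPc'.2.2 x hx v (by rw [dw_head hP]; rfl)

/-- A list whose head and last differ has at least two elements. -/
lemma two_le_length_of_head_ne_last {α : Type*} {l : List α} {x y : α}
    (hh : l.head? = some x) (hl : l.getLast? = some y) (hxy : x ≠ y) : 2 ≤ l.length := by
  rcases l with _ | ⟨a, _ | ⟨b, t⟩⟩
  · simp at hh
  · simp only [List.head?_cons, Option.some_inj] at hh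
    simp only [List.getLast?_singleton, Option.some_inj] at hl
    exact absurd (hh.symm.trans hl) hxy
  · simp

/-- The swap of two restricted paths is restricted, provided `v` is not the final
point of `Q`. -/
lemma SW_isRSch {v : ℤ × ℤ} {P Q : List (ℤ × ℤ)} {a b c d : ℕ}
    (hPs : IsRSch P a b) (hQs : IsRSch Q c d) (hP : v ∈ P) (hQ : v ∈ Q)
    (hvl : v ≠ (0, (d : ℤ))) : IsRSch (SW v P Q) a d := by
  refine ⟨SW_isSch hPs.1 hQs.1 hP hQ, ?_⟩
  intro x y hxy
  have hdwlast : (Q.dropWhile (nev v)).getLast? = some (0, (d : ℤ)) := by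
    rw [← suffix_getLast? (dw_suffix v Q) (dw_ne_nil hQ)]
    exact hQs.1.2.2.1
  have hlen : 2 ≤ (Q.dropWhile (nev v)).length :=
    two_le_length_of_head_ne_last (dw_head hQ) hdwlast hvl
  have h2 : [x, y] <:+ Q.dropWhile (nev v) := suffix_pair_of_suffix_append hxy hlen
  exact hQs.2 x y (h2.trans (dw_suffix v Q))

lemma SW_subset {v : ℤ × ℤ} {P Q : List (ℤ × ℤ)} {u : ℤ × ℤ} (h : u ∈ SW v P Q) :
    u ∈ P ∨ u ∈ Q := by
  rcases List.mem_append.mp h with h | h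
  · exact Or.inl ((List.takeWhile_prefix _).subset h)
  · exact Or.inr ((dw_suffix v Q).subset h)

/-- Elements of the initial segment are `Mono`-before `v`. -/
lemma tw_mono {v : ℤ × ℤ} {P : List (ℤ × ℤ)} (hpw : P.Pairwise Mono) (hP : v ∈ P)
    {u : ℤ × ℤ} (hu : u ∈ P.takeWhile (nev v)) : Mono u v := by
  have hsplit : P.takeWhile (nev v) ++ P.dropWhile (nev v) = P :=
    List.takeWhile_append_dropWhile
  rw [← hsplit] at hpw
  rw [List.pairwise_append] at hpw
  exact hpw.2.2 u hu v (v_mem_dw hP)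

/-- Elements of the tail are `v` or `Mono`-after `v`. -/
lemma dw_mono {v : ℤ × ℤ} {Q : List (ℤ × ℤ)} (hpw : Q.Pairwise Mono) (hQ : v ∈ Q)
    {u : ℤ × ℤ} (hu : u ∈ Q.dropWhile (nev v)) : u = v ∨ Mono v u := by
  have hpw' : (Q.dropWhile (nev v)).Pairwise Mono := hpw.sublist (dw_suffix v Q).sublist
  rcases pairwise_head? hpw' (dw_head hQ) hu with h | h
  · exact Or.inl h
  · exact Or.inr h

/-- Under `Nodup`, nothing in the initial segment lies in the tail. -/
lemma tw_dw_disjoint {v : ℤ × ℤ} {P : List (ℤ × ℤ)} (hnd : P.Nodup) {u : ℤ × ℤ}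
    (h1 : u ∈ P.takeWhile (nev v)) (h2 : u ∈ P.dropWhile (nev v)) : False := by
  have hsplit : P.takeWhile (nev v) ++ P.dropWhile (nev v) = P :=
    List.takeWhile_append_dropWhile
  rw [← hsplit] at hnd
  rw [List.nodup_append] at hnd
  exact hnd.2.2 u h1 u h2 rfl

end Paper20V

namespace Paper20V

/-- φ-value of a lattice point. -/
def phi (q : ℤ × ℤ) : ℤ := q.2 - q.1

lemma Mono.phi_lt {u v : ℤ × ℤ} (h : Mono u v) : phi u < phi v := h.2.2

/-- Canonical φ-minimal element of a finite set of lattice points. -/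
noncomputable def phiMin (W : Finset (ℤ × ℤ)) : ℤ × ℤ :=
  let m := WithTop.untopD 0 (W.image phi).min
  let x := WithTop.untopD 0 ((W.filter (fun q => phi q = m)).image Prod.fst).min
  (x, m + x)

lemma phiMin_mem {W : Finset (ℤ × ℤ)} (h : W.Nonempty) : phiMin W ∈ W := by
  classical
  rw [phiMin]
  set m := WithTop.untopD 0 (W.image phi).min with hm
  have hm' : m = (W.image phi).min' (h.image _) := by
    rw [hm, ← Finset.coe_min' (h.image phi)]; rfl
  have hmmem : m ∈ W.image phi := by rw [hm']; exact Finset.min'_mem _ _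
  obtain ⟨q, hqW, hq⟩ := Finset.mem_image.mp hmmem
  have hfil : (W.filter (fun q => phi q = m)).Nonempty := ⟨q, Finset.mem_filter.mpr ⟨hqW, hq⟩⟩
  set x := WithTop.untopD 0 ((W.filter (fun q => phi q = m)).image Prod.fst).min with hx
  have hx' : x = ((W.filter (fun q => phi q = m)).image Prod.fst).min' (hfil.image _) := by
    rw [hx, ← Finset.coe_min' ((hfil.image Prod.fst))]; rfl
  have hxmem : x ∈ (W.filter (fun q => phi q = m)).image Prod.fst := by
    rw [hx']; exact Finset.min'_mem _ _
  obtain ⟨u, huW, hu⟩ := Finset.mem_image.mp hxmem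
  obtain ⟨huW', hphi⟩ := Finset.mem_filter.mp huW
  have h2 : u.2 = m + u.1 := by
    simp only [phi] at hphi
    omega
  have h3 : u = (x, m + x) := by
    rw [Prod.ext_iff]
    exact ⟨hu, by simp only []; rw [h2, hu]⟩
  rw [← h3]
  exact huW'

lemma phiMin_min {W : Finset (ℤ × ℤ)} (h : W.Nonempty) {w : ℤ × ℤ} (hw : w ∈ W) :
    phi (phiMin W) ≤ phi w := by
  classical
  have hne : (W.image phi).Nonempty := h.image _
  have hphi : phi (phiMin W) = WithTop.untopD 0 (W.image phi).min := by
    rw [phiMin]; simp [phi]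
  have hcoe : (W.image phi).min = ((W.image phi).min' hne : WithTop ℤ) :=
    (Finset.coe_min' hne).symm
  rw [hphi, hcoe, WithTop.untopD_coe]
  exact Finset.min'_le _ _ (Finset.mem_image_of_mem phi hw)

lemma phiMin_eq {W : Finset (ℤ × ℤ)} (h : W.Nonempty) {u : ℤ × ℤ} (huW : u ∈ W)
    (hmin : ∀ w ∈ W, phi u ≤ phi w) (huniq : ∀ w ∈ W, phi w = phi u → w = u) :
    phiMin W = u := by
  have h1 : phi (phiMin W) ≤ phi u := phiMin_min h huW
  have h2 : phi u ≤ phi (phiMin W) := hmin _ (phiMin_mem h)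
  exact huniq _ (phiMin_mem h) (le_antisymm h1 h2)

end Paper20V

namespace Paper20V

variable {F : Finset ℕ}

/-- Configurations: a permutation together with a tuple of paths. -/
abbrev Cfg (F : Finset ℕ) :=
  (_ : Equiv.Perm {x // x ∈ F}) × ({x // x ∈ F} → List (ℤ × ℤ))

/-- Pairwise vertex-disjointness of a tuple of paths. -/
def Dj (p : {x // x ∈ F} → List (ℤ × ℤ)) : Prop :=
  ∀ k l : {x // x ∈ F}, k ≠ l → ∀ q ∈ p k, q ∉ p l

instance (p : {x // x ∈ F} → List (ℤ × ℤ)) : Decidable (Dj p) := by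
  unfold Dj; infer_instance

/-- The finite set of path tuples compatible with `σ`. -/
noncomputable def famSet (F : Finset ℕ) (σ : Equiv.Perm {x // x ∈ F}) :
    Finset ({x // x ∈ F} → List (ℤ × ℤ)) :=
  Fintype.piFinset fun k => PF k ((σ k : ℕ) + 1)

/-- All configurations. -/
noncomputable def cfgs (F : Finset ℕ) : Finset (Cfg F) :=
  Finset.univ.sigma fun σ => famSet F σ

lemma mem_cfgs {x : Cfg F} : x ∈ cfgs F ↔ ∀ k, IsRSch (x.2 k) k ((x.1 k : ℕ) + 1) := by
  constructor
  · intro h k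
    have := (Finset.mem_sigma.mp h).2
    rw [famSet, Fintype.mem_piFinset] at this
    exact mem_PF.mp (this k)
  · intro h
    rw [cfgs, Finset.mem_sigma]
    exact ⟨Finset.mem_univ _, by rw [famSet, Fintype.mem_piFinset]; exact fun k => mem_PF.mpr (h k)⟩

/-- Indices whose path meets another path. -/
def Ksh (p : {x // x ∈ F} → List (ℤ × ℤ)) : Finset {x // x ∈ F} :=
  Finset.univ.filter fun k => ∃ l, l ≠ k ∧ ∃ v ∈ p k, v ∈ p l

lemma mem_Ksh {p : {x // x ∈ F} → List (ℤ × ℤ)} {k : {x // x ∈ F}} :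
    k ∈ Ksh p ↔ ∃ l, l ≠ k ∧ ∃ v ∈ p k, v ∈ p l := by
  rw [Ksh, Finset.mem_filter]
  simp

lemma Ksh_nonempty {p : {x // x ∈ F} → List (ℤ × ℤ)} (hnd : ¬ Dj p) : (Ksh p).Nonempty := by
  unfold Dj at hnd
  push_neg at hnd
  obtain ⟨k, l, hkl, v, hv1, hv2⟩ := hnd
  exact ⟨k, mem_Ksh.mpr ⟨l, Ne.symm hkl, v, hv1, hv2⟩⟩

/-- The minimal index whose path meets another path. -/
noncomputable def k0 (p : {x // x ∈ F} → List (ℤ × ℤ)) (hnd : ¬ Dj p) : {x // x ∈ F} :=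
  (Ksh p).min' (Ksh_nonempty hnd)

/-- Vertices of `p k` shared with another path. -/
def Wsh (p : {x // x ∈ F} → List (ℤ × ℤ)) (k : {x // x ∈ F}) : Finset (ℤ × ℤ) :=
  (p k).toFinset.filter fun v => ∃ l, l ≠ k ∧ v ∈ p l

lemma mem_Wsh {p : {x // x ∈ F} → List (ℤ × ℤ)} {k : {x // x ∈ F}} {v : ℤ × ℤ} :
    v ∈ Wsh p k ↔ v ∈ p k ∧ ∃ l, l ≠ k ∧ v ∈ p l := by
  rw [Wsh, Finset.mem_filter, List.mem_toFinset]

lemma Wsh_nonempty {p : {x // x ∈ F} → List (ℤ × ℤ)} (hnd : ¬ Dj p) :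
    (Wsh p (k0 p hnd)).Nonempty := by
  have := Finset.min'_mem (Ksh p) (Ksh_nonempty hnd)
  rw [mem_Ksh] at this
  obtain ⟨l, hl, v, hv1, hv2⟩ := this
  exact ⟨v, mem_Wsh.mpr ⟨hv1, l, hl, hv2⟩⟩

/-- The canonical (φ-minimal) shared vertex on `p k₀`. -/
noncomputable def v0 (p : {x // x ∈ F} → List (ℤ × ℤ)) (hnd : ¬ Dj p) : ℤ × ℤ :=
  phiMin (Wsh p (k0 p hnd))

lemma v0_mem_Wsh {p : {x // x ∈ F} → List (ℤ × ℤ)} (hnd : ¬ Dj p) :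
    v0 p hnd ∈ Wsh p (k0 p hnd) :=
  phiMin_mem (Wsh_nonempty hnd)

lemma v0_min {p : {x // x ∈ F} → List (ℤ × ℤ)} (hnd : ¬ Dj p) {w : ℤ × ℤ}
    (hw : w ∈ Wsh p (k0 p hnd)) : phi (v0 p hnd) ≤ phi w :=
  phiMin_min (Wsh_nonempty hnd) hw

/-- Indices `l ≠ k` whose path passes through `v`. -/
def Lsh (p : {x // x ∈ F} → List (ℤ × ℤ)) (k : {x // x ∈ F}) (v : ℤ × ℤ) :
    Finset {x // x ∈ F} :=
  Finset.univ.filter fun l => l ≠ k ∧ v ∈ p l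

lemma mem_Lsh {p : {x // x ∈ F} → List (ℤ × ℤ)} {k l : {x // x ∈ F}} {v : ℤ × ℤ} :
    l ∈ Lsh p k v ↔ l ≠ k ∧ v ∈ p l := by
  rw [Lsh, Finset.mem_filter]
  simp

lemma Lsh_nonempty {p : {x // x ∈ F} → List (ℤ × ℤ)} (hnd : ¬ Dj p) :
    (Lsh p (k0 p hnd) (v0 p hnd)).Nonempty := by
  have := v0_mem_Wsh hnd
  rw [mem_Wsh] at this
  obtain ⟨-, l, hl1, hl2⟩ := this
  exact ⟨l, mem_Lsh.mpr ⟨hl1, hl2⟩⟩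

/-- The minimal other index through the canonical shared vertex. -/
noncomputable def l0 (p : {x // x ∈ F} → List (ℤ × ℤ)) (hnd : ¬ Dj p) : {x // x ∈ F} :=
  (Lsh p (k0 p hnd) (v0 p hnd)).min' (Lsh_nonempty hnd)

lemma l0_spec {p : {x // x ∈ F} → List (ℤ × ℤ)} (hnd : ¬ Dj p) :
    l0 p hnd ≠ k0 p hnd ∧ v0 p hnd ∈ p (l0 p hnd) :=
  mem_Lsh.mp (Finset.min'_mem _ (Lsh_nonempty hnd))

lemma v0_mem_pk0 {p : {x // x ∈ F} → List (ℤ × ℤ)} (hnd : ¬ Dj p) :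
    v0 p hnd ∈ p (k0 p hnd) :=
  (mem_Wsh.mp (v0_mem_Wsh hnd)).1

/-- The tail-swap involution on configurations. -/
noncomputable def gsw (x : Cfg F) (hnd : ¬ Dj x.2) : Cfg F :=
  ⟨x.1 * Equiv.swap (k0 x.2 hnd) (l0 x.2 hnd),
    Function.update
      (Function.update x.2 (k0 x.2 hnd)
        (SW (v0 x.2 hnd) (x.2 (k0 x.2 hnd)) (x.2 (l0 x.2 hnd))))
      (l0 x.2 hnd)
      (SW (v0 x.2 hnd) (x.2 (l0 x.2 hnd)) (x.2 (k0 x.2 hnd)))⟩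

end Paper20V

namespace Paper20V

section Invol

variable {F : Finset ℕ} {σ : Equiv.Perm {x // x ∈ F}} {p : {x // x ∈ F} → List (ℤ × ℤ)}

lemma v0_fst_ne_zero (hval : ∀ k, IsRSch (p k) k ((σ k : ℕ) + 1)) (hnd : ¬ Dj p) :
    (v0 p hnd).1 ≠ 0 := by
  intro h0
  have h1 := (hval _).eq_last_of_fst_eq_zero (v0_mem_pk0 hnd) h0
  have h2 := (hval _).eq_last_of_fst_eq_zero (l0_spec hnd).2 h0
  rw [h1] at h2
  have h3 : (((σ (k0 p hnd) : ℕ) + 1 : ℕ) : ℤ) = (((σ (l0 p hnd) : ℕ) + 1 : ℕ) : ℤ) := by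
    have := congrArg Prod.snd h2
    simpa using this
  have h4 : (σ (k0 p hnd) : ℕ) + 1 = (σ (l0 p hnd) : ℕ) + 1 := by exact_mod_cast h3
  have h5 : k0 p hnd = l0 p hnd := σ.injective (Subtype.ext (by omega))
  exact (l0_spec hnd).1 h5.symm

lemma k0_ne_l0 {p : {x // x ∈ F} → List (ℤ × ℤ)} (hnd : ¬ Dj p) : k0 p hnd ≠ l0 p hnd :=
  Ne.symm (l0_spec hnd).1

lemma gsw_fst' (x : Cfg F) (hnd : ¬ Dj x.2) :
    (gsw x hnd).1 = x.1 * Equiv.swap (k0 x.2 hnd) (l0 x.2 hnd) := rfl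

lemma gsw_snd' (x : Cfg F) (hnd : ¬ Dj x.2) :
    (gsw x hnd).2 =
      Function.update
        (Function.update x.2 (k0 x.2 hnd)
          (SW (v0 x.2 hnd) (x.2 (k0 x.2 hnd)) (x.2 (l0 x.2 hnd))))
        (l0 x.2 hnd)
        (SW (v0 x.2 hnd) (x.2 (l0 x.2 hnd)) (x.2 (k0 x.2 hnd))) := rfl

lemma gsw_snd_k0' (x : Cfg F) (hnd : ¬ Dj x.2) :
    (gsw x hnd).2 (k0 x.2 hnd) =
      SW (v0 x.2 hnd) (x.2 (k0 x.2 hnd)) (x.2 (l0 x.2 hnd)) := by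
  rw [gsw_snd', Function.update_of_ne (k0_ne_l0 hnd), Function.update_self]

lemma gsw_snd_l0' (x : Cfg F) (hnd : ¬ Dj x.2) :
    (gsw x hnd).2 (l0 x.2 hnd) =
      SW (v0 x.2 hnd) (x.2 (l0 x.2 hnd)) (x.2 (k0 x.2 hnd)) := by
  rw [gsw_snd', Function.update_self]

lemma gsw_snd_other' (x : Cfg F) (hnd : ¬ Dj x.2) {m : {x // x ∈ F}}
    (h1 : m ≠ k0 x.2 hnd) (h2 : m ≠ l0 x.2 hnd) : (gsw x hnd).2 m = x.2 m := by
  rw [gsw_snd', Function.update_of_ne h2, Function.update_of_ne h1]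

lemma gsw_snd_k0 (hnd : ¬ Dj p) :
    (gsw (⟨σ, p⟩ : Cfg F) hnd).2 (k0 p hnd) =
      SW (v0 p hnd) (p (k0 p hnd)) (p (l0 p hnd)) :=
  gsw_snd_k0' (⟨σ, p⟩ : Cfg F) hnd

lemma gsw_snd_l0 (hnd : ¬ Dj p) :
    (gsw (⟨σ, p⟩ : Cfg F) hnd).2 (l0 p hnd) =
      SW (v0 p hnd) (p (l0 p hnd)) (p (k0 p hnd)) :=
  gsw_snd_l0' (⟨σ, p⟩ : Cfg F) hnd

lemma gsw_snd_other (hnd : ¬ Dj p) {m : {x // x ∈ F}} (h1 : m ≠ k0 p hnd)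
    (h2 : m ≠ l0 p hnd) : (gsw (⟨σ, p⟩ : Cfg F) hnd).2 m = p m :=
  gsw_snd_other' (⟨σ, p⟩ : Cfg F) hnd h1 h2

lemma gsw_fst_k0 (hnd : ¬ Dj p) :
    (gsw (⟨σ, p⟩ : Cfg F) hnd).1 (k0 p hnd) = σ (l0 p hnd) := by
  rw [gsw_fst', Equiv.Perm.mul_apply, Equiv.swap_apply_left]

lemma gsw_fst_l0 (hnd : ¬ Dj p) :
    (gsw (⟨σ, p⟩ : Cfg F) hnd).1 (l0 p hnd) = σ (k0 p hnd) := by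
  rw [gsw_fst', Equiv.Perm.mul_apply, Equiv.swap_apply_right]

lemma gsw_fst_other (hnd : ¬ Dj p) {m : {x // x ∈ F}} (h1 : m ≠ k0 p hnd)
    (h2 : m ≠ l0 p hnd) : (gsw (⟨σ, p⟩ : Cfg F) hnd).1 m = σ m := by
  rw [gsw_fst', Equiv.Perm.mul_apply, Equiv.swap_apply_of_ne_of_ne h1 h2]

/-- The swapped configuration is valid. -/
lemma gsw_valid (hval : ∀ k, IsRSch (p k) k ((σ k : ℕ) + 1)) (hnd : ¬ Dj p) :
    ∀ k, IsRSch ((gsw (⟨σ, p⟩ : Cfg F) hnd).2 k) k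
      (((gsw (⟨σ, p⟩ : Cfg F) hnd).1 k : ℕ) + 1) := by
  intro k
  by_cases hk : k = k0 p hnd
  · subst hk
    rw [gsw_snd_k0 hnd, gsw_fst_k0 hnd]
    exact SW_isRSch (hval _) (hval _) (v0_mem_pk0 hnd) (l0_spec hnd).2
      (fun h => v0_fst_ne_zero hval hnd (by rw [h]))
  · by_cases hl : k = l0 p hnd
    · subst hl
      rw [gsw_snd_l0 hnd, gsw_fst_l0 hnd]
      exact SW_isRSch (hval _) (hval _) (l0_spec hnd).2 (v0_mem_pk0 hnd)
        (fun h => v0_fst_ne_zero hval hnd (by rw [h]))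
    · rw [gsw_snd_other hnd hk hl, gsw_fst_other hnd hk hl]
      exact hval k

/-- The swapped configuration is still non-disjoint. -/
lemma gsw_ndj (hnd : ¬ Dj p) : ¬ Dj (gsw (⟨σ, p⟩ : Cfg F) hnd).2 := by
  intro hdj
  refine hdj (k0 p hnd) (l0 p hnd) (k0_ne_l0 hnd) (v0 p hnd) ?_ ?_
  · rw [gsw_snd_k0 hnd]; exact v_mem_SW _ (l0_spec hnd).2
  · rw [gsw_snd_l0 hnd]; exact v_mem_SW _ (v0_mem_pk0 hnd)

/-- Any point of any path of the swapped family is a point of `p m`, `p k₀` or `p l₀`. -/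
lemma gsw_point_sub (hnd : ¬ Dj p) {m : {x // x ∈ F}} {v : ℤ × ℤ}
    (h : v ∈ (gsw (⟨σ, p⟩ : Cfg F) hnd).2 m) :
    v ∈ p m ∨ v ∈ p (k0 p hnd) ∨ v ∈ p (l0 p hnd) := by
  by_cases hk : m = k0 p hnd
  · subst hk
    rw [gsw_snd_k0 hnd] at h
    rcases SW_subset h with h | h
    · exact Or.inl h
    · exact Or.inr (Or.inr h)
  · by_cases hl : m = l0 p hnd
    · subst hl
      rw [gsw_snd_l0 hnd] at h
      rcases SW_subset h with h | h
      · exact Or.inl h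
      · exact Or.inr (Or.inl h)
    · rw [gsw_snd_other hnd hk hl] at h
      exact Or.inl h

/-- Stability of `k₀` under the swap. -/
lemma k0_gsw (hnd : ¬ Dj p) (hnd' : ¬ Dj (gsw (⟨σ, p⟩ : Cfg F) hnd).2) :
    k0 (gsw (⟨σ, p⟩ : Cfg F) hnd).2 hnd' = k0 p hnd := by
  have hK' : k0 p hnd ∈ Ksh (gsw (⟨σ, p⟩ : Cfg F) hnd).2 := by
    rw [mem_Ksh]
    refine ⟨l0 p hnd, (l0_spec hnd).1, v0 p hnd, ?_, ?_⟩
    · rw [gsw_snd_k0 hnd]; exact v_mem_SW _ (l0_spec hnd).2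
    · rw [gsw_snd_l0 hnd]; exact v_mem_SW _ (v0_mem_pk0 hnd)
  have hbound : ∀ k ∈ Ksh (gsw (⟨σ, p⟩ : Cfg F) hnd).2, k0 p hnd ≤ k := by
    intro k hk
    by_cases hkK : k = k0 p hnd
    · rw [hkK]
    · by_cases hkL : k = l0 p hnd
      · subst hkL
        refine Finset.min'_le _ _ (mem_Ksh.mpr ?_)
        exact ⟨k0 p hnd, Ne.symm (l0_spec hnd).1, v0 p hnd, (l0_spec hnd).2, v0_mem_pk0 hnd⟩
      · obtain ⟨l, hlk, v, hv1, hv2⟩ := mem_Ksh.mp hk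
        have hv1' : v ∈ p k := by rw [gsw_snd_other hnd hkK hkL] at hv1; exact hv1
        refine Finset.min'_le _ _ (mem_Ksh.mpr ?_)
        rcases gsw_point_sub hnd hv2 with h | h | h
        · exact ⟨l, hlk, v, hv1', h⟩
        · exact ⟨k0 p hnd, Ne.symm hkK, v, hv1', h⟩
        · exact ⟨l0 p hnd, Ne.symm hkL, v, hv1', h⟩
  exact le_antisymm (Finset.min'_le _ _ hK') (hbound _ (Finset.min'_mem _ _))

/-- Stability of `v₀` under the swap. -/
lemma v0_gsw (hval : ∀ k, IsRSch (p k) k ((σ k : ℕ) + 1)) (hnd : ¬ Dj p)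
    (hnd' : ¬ Dj (gsw (⟨σ, p⟩ : Cfg F) hnd).2) :
    v0 (gsw (⟨σ, p⟩ : Cfg F) hnd).2 hnd' = v0 p hnd := by
  have hpwK : (p (k0 p hnd)).Pairwise Mono := (hval _).1.pairwise
  have hpwL : (p (l0 p hnd)).Pairwise Mono := (hval _).1.pairwise
  have hndK : (p (k0 p hnd)).Nodup := (hval _).1.nodup
  have hmemA : v0 p hnd ∈ (gsw (⟨σ, p⟩ : Cfg F) hnd).2 (k0 p hnd) := by
    rw [gsw_snd_k0 hnd]; exact v_mem_SW _ (l0_spec hnd).2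
  have hmemB : v0 p hnd ∈ (gsw (⟨σ, p⟩ : Cfg F) hnd).2 (l0 p hnd) := by
    rw [gsw_snd_l0 hnd]; exact v_mem_SW _ (v0_mem_pk0 hnd)
  have hvW' : v0 p hnd ∈ Wsh (gsw (⟨σ, p⟩ : Cfg F) hnd).2 (k0 p hnd) :=
    mem_Wsh.mpr ⟨hmemA, l0 p hnd, (l0_spec hnd).1, hmemB⟩
  have hcase : ∀ w ∈ Wsh (gsw (⟨σ, p⟩ : Cfg F) hnd).2 (k0 p hnd),
      w = v0 p hnd ∨ phi (v0 p hnd) < phi w := by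
    intro w hw
    obtain ⟨hwA, l, hlK, hwl⟩ := mem_Wsh.mp hw
    rw [gsw_snd_k0 hnd, SW] at hwA
    rcases List.mem_append.mp hwA with hwtw | hwdw
    · exfalso
      have hwpk : w ∈ p (k0 p hnd) := (List.takeWhile_prefix _).subset hwtw
      have hphiw : phi w < phi (v0 p hnd) :=
        (tw_mono hpwK (v0_mem_pk0 hnd) hwtw).phi_lt
      have hwW : w ∈ Wsh p (k0 p hnd) := by
        rw [mem_Wsh]
        refine ⟨hwpk, ?_⟩
        by_cases hlL : l = l0 p hnd
        · subst hlL
          rw [gsw_snd_l0 hnd, SW] at hwl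
          rcases List.mem_append.mp hwl with h | h
          · exact ⟨l0 p hnd, (l0_spec hnd).1, (List.takeWhile_prefix _).subset h⟩
          · exact absurd (tw_dw_disjoint hndK hwtw h) (fun x => x)
        · rw [gsw_snd_other hnd hlK hlL] at hwl
          exact ⟨l, hlK, hwl⟩
      have := v0_min hnd hwW
      omega
    · rcases dw_mono hpwL (l0_spec hnd).2 hwdw with h | h
      · exact Or.inl h
      · exact Or.inr h.phi_lt
  have hrw : v0 (gsw (⟨σ, p⟩ : Cfg F) hnd).2 hnd' =
      phiMin (Wsh (gsw (⟨σ, p⟩ : Cfg F) hnd).2 (k0 p hnd)) := by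
    rw [v0, k0_gsw hnd hnd']
  rw [hrw]
  refine phiMin_eq ⟨_, hvW'⟩ hvW' ?_ ?_
  · intro w hw
    rcases hcase w hw with rfl | h
    · exact le_refl _
    · exact le_of_lt h
  · intro w hw hphi
    rcases hcase w hw with rfl | h
    · rfl
    · omega

/-- Stability of `l₀` under the swap. -/
lemma l0_gsw (hval : ∀ k, IsRSch (p k) k ((σ k : ℕ) + 1)) (hnd : ¬ Dj p)
    (hnd' : ¬ Dj (gsw (⟨σ, p⟩ : Cfg F) hnd).2) :
    l0 (gsw (⟨σ, p⟩ : Cfg F) hnd).2 hnd' = l0 p hnd := by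
  have hLmem : l0 p hnd ∈ Lsh (gsw (⟨σ, p⟩ : Cfg F) hnd).2 (k0 p hnd) (v0 p hnd) := by
    rw [mem_Lsh]
    refine ⟨(l0_spec hnd).1, ?_⟩
    rw [gsw_snd_l0 hnd]; exact v_mem_SW _ (v0_mem_pk0 hnd)
  have hbound : ∀ l ∈ Lsh (gsw (⟨σ, p⟩ : Cfg F) hnd).2 (k0 p hnd) (v0 p hnd),
      l0 p hnd ≤ l := by
    intro l hl
    obtain ⟨hlK, hvl⟩ := mem_Lsh.mp hl
    by_cases hlL : l = l0 p hnd
    · rw [hlL]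
    · rw [gsw_snd_other hnd hlK hlL] at hvl
      exact Finset.min'_le _ _ (mem_Lsh.mpr ⟨hlK, hvl⟩)
  have hSet : Lsh (gsw (⟨σ, p⟩ : Cfg F) hnd).2
      (k0 (gsw (⟨σ, p⟩ : Cfg F) hnd).2 hnd') (v0 (gsw (⟨σ, p⟩ : Cfg F) hnd).2 hnd') =
      Lsh (gsw (⟨σ, p⟩ : Cfg F) hnd).2 (k0 p hnd) (v0 p hnd) := by
    rw [k0_gsw hnd hnd', v0_gsw hval hnd hnd']
  have hmem' : l0 (gsw (⟨σ, p⟩ : Cfg F) hnd).2 hnd' ∈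
      Lsh (gsw (⟨σ, p⟩ : Cfg F) hnd).2 (k0 p hnd) (v0 p hnd) := by
    rw [← hSet]
    exact Finset.min'_mem _ _
  have h1 : l0 p hnd ≤ l0 (gsw (⟨σ, p⟩ : Cfg F) hnd).2 hnd' := hbound _ hmem'
  have h2 : l0 (gsw (⟨σ, p⟩ : Cfg F) hnd).2 hnd' ≤ l0 p hnd := by
    have hL' : l0 p hnd ∈ Lsh (gsw (⟨σ, p⟩ : Cfg F) hnd).2
        (k0 (gsw (⟨σ, p⟩ : Cfg F) hnd).2 hnd') (v0 (gsw (⟨σ, p⟩ : Cfg F) hnd).2 hnd') := by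
      rw [hSet]
      exact hLmem
    exact Finset.min'_le _ _ hL'
  exact le_antisymm h2 h1

/-- The swap is an involution. -/
lemma gsw_gsw (hval : ∀ k, IsRSch (p k) k ((σ k : ℕ) + 1)) (hnd : ¬ Dj p)
    (hnd' : ¬ Dj (gsw (⟨σ, p⟩ : Cfg F) hnd).2) :
    gsw (gsw (⟨σ, p⟩ : Cfg F) hnd) hnd' = (⟨σ, p⟩ : Cfg F) := by
  have hK := k0_gsw hnd hnd'
  have hV := v0_gsw hval hnd hnd'
  have hL := l0_gsw hval hnd hnd'
  have h1 : (gsw (gsw (⟨σ, p⟩ : Cfg F) hnd) hnd').1 = σ := by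
    rw [gsw_fst', hK, hL, gsw_fst']
    show (σ * Equiv.swap (k0 p hnd) (l0 p hnd)) * Equiv.swap (k0 p hnd) (l0 p hnd) = σ
    rw [mul_assoc, Equiv.swap_mul_self, mul_one]
  have h2 : (gsw (gsw (⟨σ, p⟩ : Cfg F) hnd) hnd').2 = p := by
    funext m
    by_cases hmL : m = l0 p hnd
    · subst hmL
      have e1 := gsw_snd_l0' (gsw (⟨σ, p⟩ : Cfg F) hnd) hnd'
      rw [hK, hV, hL] at e1
      rw [gsw_snd_l0 hnd, gsw_snd_k0 hnd] at e1
      rw [SW_SW (l0_spec hnd).2 (v0_mem_pk0 hnd)] at e1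
      exact e1
    · by_cases hmK : m = k0 p hnd
      · subst hmK
        have e1 := gsw_snd_k0' (gsw (⟨σ, p⟩ : Cfg F) hnd) hnd'
        rw [hK, hV, hL] at e1
        rw [gsw_snd_l0 hnd, gsw_snd_k0 hnd] at e1
        rw [SW_SW (v0_mem_pk0 hnd) (l0_spec hnd).2] at e1
        exact e1
      · have e1 : (gsw (gsw (⟨σ, p⟩ : Cfg F) hnd) hnd').2 m =
            (gsw (⟨σ, p⟩ : Cfg F) hnd).2 m := by
          refine gsw_snd_other' _ hnd' ?_ ?_
          · rw [hK]; exact hmK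
          · rw [hL]; exact hmL
        rw [e1]
        exact gsw_snd_other hnd hmK hmL
  exact Sigma.ext h1 (heq_of_eq h2)

end Invol

end Paper20V

namespace Paper20V

lemma perm_eq_one_of_strictMono {α : Type*} [LinearOrder α] [Fintype α]
    (σ : Equiv.Perm α) (h : StrictMono σ) : σ = 1 := by
  classical
  by_contra hne
  have hex : (Finset.univ.filter (fun x => σ x ≠ x)).Nonempty := by
    rw [Finset.filter_nonempty_iff]
    by_contra hc
    push_neg at hc
    exact hne (Equiv.ext fun x => hc x (Finset.mem_univ x))
  set a := (Finset.univ.filter (fun x => σ x ≠ x)).min' hex with ha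
  have haf : σ a ≠ a :=
    (Finset.mem_filter.mp (Finset.min'_mem (Finset.univ.filter (fun x => σ x ≠ x)) hex)).2
  have hmin : ∀ b, σ b ≠ b → a ≤ b := by
    intro b hb
    apply Finset.min'_le
    rw [Finset.mem_filter]
    exact ⟨Finset.mem_univ _, hb⟩
  rcases lt_or_gt_of_ne haf with hlt | hgt
  · have h1 : σ (σ a) = σ a := by
      by_contra hc
      exact absurd (hmin _ hc) (not_le.mpr hlt)
    exact haf (σ.injective h1)
  · have hb : σ (σ.symm a) = a := σ.apply_symm_apply a
    have hbne : σ.symm a ≠ a := by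
      intro hc
      rw [hc] at hb
      exact haf hb
    have hage : a ≤ σ.symm a := by
      rcases lt_or_gt_of_ne hbne with h1 | h1
      · exfalso
        have := hmin (σ.symm a) (by rw [hb]; exact Ne.symm hbne)
        exact absurd this (not_le.mpr h1)
      · exact le_of_lt h1
    have hab : a < σ.symm a := lt_of_le_of_ne hage (Ne.symm hbne)
    have h2 : σ a < a := by
      have := h hab
      rw [hb] at this
      exact this
    exact absurd h2 (not_lt.mpr (le_of_lt hgt))

lemma dj_perm_eq_one {F : Finset ℕ} {σ : Equiv.Perm {x // x ∈ F}}
    {p : {x // x ∈ F} → List (ℤ × ℤ)} (hval : ∀ k, IsRSch (p k) k ((σ k : ℕ) + 1))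
    (hdj : Dj p) : σ = 1 := by
  apply perm_eq_one_of_strictMono
  intro k l hkl
  by_contra hc
  push_neg at hc
  have hne : σ l ≠ σ k := fun h => (ne_of_lt hkl) (σ.injective h.symm)
  have hlt : σ l < σ k := lt_of_le_of_ne hc hne
  obtain ⟨v, hv1, hv2⟩ := crossing (hval k).1 (hval l).1
    (Subtype.coe_lt_coe.mpr hkl) (Nat.succ_le_succ (le_of_lt (Subtype.coe_lt_coe.mpr hlt)))
  exact hdj k l (ne_of_lt hkl) v hv1 hv2

/-- The determinant as a signed sum over configurations. -/
lemma det_eq_signed_sum (F : Finset ℕ) :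
    Matrix.det (Matrix.of fun i j : {x // x ∈ F} => (Stilde i ((j : ℕ) + 1) : ℤ)) =
      ∑ x ∈ cfgs F, ((Equiv.Perm.sign x.1 : ℤˣ) : ℤ) := by
  rw [cfgs, Finset.sum_sigma, ← Matrix.det_transpose, Matrix.det_apply']
  refine Finset.sum_congr rfl ?_
  intro σ _
  have hconst : ∀ s ∈ famSet F σ,
      ((Equiv.Perm.sign (⟨σ, s⟩ : Cfg F).1 : ℤˣ) : ℤ) = ((Equiv.Perm.sign σ : ℤˣ) : ℤ) :=
    fun s _ => rfl
  rw [Finset.sum_congr rfl hconst, Finset.sum_const, nsmul_eq_mul]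
  have hcard : ((famSet F σ).card : ℤ) =
      ∏ k : {x // x ∈ F}, ((Stilde k ((σ k : ℕ) + 1) : ℕ) : ℤ) := by
    rw [famSet, Fintype.card_piFinset]
    push_cast
    exact Finset.prod_congr rfl fun k _ => by rw [Stilde_eq_card_PF]
  rw [hcard, mul_comm]
  have hprod : (∏ i : {x // x ∈ F},
      (Matrix.of fun i j : {x // x ∈ F} => (Stilde i ((j : ℕ) + 1) : ℤ)).transpose (σ i) i)
      = ∏ k : {x // x ∈ F}, ((Stilde k ((σ k : ℕ) + 1) : ℕ) : ℤ) :=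
    Finset.prod_congr rfl fun k _ => by simp [Matrix.transpose_apply, Matrix.of_apply]
  rw [hprod]
  simp [Int.cast_id]

/-- The signed sum over non-disjoint configurations vanishes. -/
lemma sum_ndj_zero (F : Finset ℕ) :
    ∑ x ∈ (cfgs F).filter (fun x => ¬ Dj x.2), ((Equiv.Perm.sign x.1 : ℤˣ) : ℤ) = 0 := by
  refine Finset.sum_involution (fun x hx => gsw x ((Finset.mem_filter.mp hx).2))
    ?_ ?_ ?_ ?_
  · -- signs cancel
    rintro ⟨σ, p⟩ hx
    have hnd : ¬ Dj p := (Finset.mem_filter.mp hx).2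
    have h1 : (gsw (⟨σ, p⟩ : Cfg F) hnd).1 = σ * Equiv.swap (k0 p hnd) (l0 p hnd) :=
      gsw_fst' _ _
    rw [h1, Equiv.Perm.sign_mul, Equiv.Perm.sign_swap (k0_ne_l0 hnd)]
    push_cast
    ring
  · -- g x ≠ x
    rintro ⟨σ, p⟩ hx hfne
    intro hc
    have hnd : ¬ Dj p := (Finset.mem_filter.mp hx).2
    have h1 := congrArg Sigma.fst hc
    have h2 : σ * Equiv.swap (k0 p hnd) (l0 p hnd) = σ := h1
    have h3 : Equiv.swap (k0 p hnd) (l0 p hnd) = 1 :=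
      mul_left_cancel (a := σ) (h2.trans (mul_one σ).symm)
    have h4 := Equiv.ext_iff.mp h3 (k0 p hnd)
    rw [Equiv.swap_apply_left] at h4
    exact k0_ne_l0 hnd h4.symm
  · -- membership
    rintro ⟨σ, p⟩ hx
    obtain ⟨hmem, hnd⟩ := Finset.mem_filter.mp hx
    have hval := mem_cfgs.mp hmem
    refine Finset.mem_filter.mpr ⟨mem_cfgs.mpr (gsw_valid hval hnd), gsw_ndj hnd⟩
  · -- involution
    rintro ⟨σ, p⟩ hx
    obtain ⟨hmem, hnd⟩ := Finset.mem_filter.mp hx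
    have hval := mem_cfgs.mp hmem
    exact gsw_gsw hval hnd _

/-- The signed sum over all configurations counts disjoint families. -/
lemma signed_sum_eq_card (F : Finset ℕ) :
    ∑ x ∈ cfgs F, ((Equiv.Perm.sign x.1 : ℤˣ) : ℤ) =
      (((famSet F 1).filter Dj).card : ℤ) := by
  rw [← Finset.sum_filter_add_sum_filter_not (cfgs F) (fun x => Dj x.2), sum_ndj_zero,
    add_zero]
  have hall : ∀ x ∈ (cfgs F).filter (fun x => Dj x.2),
      ((Equiv.Perm.sign x.1 : ℤˣ) : ℤ) = 1 := by
    rintro ⟨σ, p⟩ hx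
    obtain ⟨hmem, hdj⟩ := Finset.mem_filter.mp hx
    have hval := mem_cfgs.mp hmem
    have : σ = 1 := dj_perm_eq_one hval hdj
    simp [this]
  rw [Finset.sum_congr rfl hall, Finset.sum_const, nsmul_eq_mul, mul_one]
  congr 1
  refine Finset.card_bij (fun x _ => x.2) ?_ ?_ ?_
  · rintro ⟨σ, p⟩ hx
    obtain ⟨hmem, hdj⟩ := Finset.mem_filter.mp hx
    have hval := mem_cfgs.mp hmem
    have hσ : σ = 1 := dj_perm_eq_one hval hdj
    subst hσ
    exact Finset.mem_filter.mpr ⟨(Finset.mem_sigma.mp hmem).2, hdj⟩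
  · rintro ⟨σ₁, p₁⟩ hx₁ ⟨σ₂, p₂⟩ hx₂ h
    obtain ⟨hmem₁, hdj₁⟩ := Finset.mem_filter.mp hx₁
    obtain ⟨hmem₂, hdj₂⟩ := Finset.mem_filter.mp hx₂
    have h₁ : σ₁ = 1 := dj_perm_eq_one (mem_cfgs.mp hmem₁) hdj₁
    have h₂ : σ₂ = 1 := dj_perm_eq_one (mem_cfgs.mp hmem₂) hdj₂
    subst h₁; subst h₂
    exact Sigma.ext rfl (heq_of_eq h)
  · intro q hq
    obtain ⟨hq1, hq2⟩ := Finset.mem_filter.mp hq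
    refine ⟨⟨1, q⟩, ?_, rfl⟩
    refine Finset.mem_filter.mpr ⟨?_, hq2⟩
    rw [cfgs, Finset.mem_sigma]
    exact ⟨Finset.mem_univ _, hq1⟩

/-- The count of valid families as a count of disjoint configurations. -/
lemma card_famvalid (F : Finset ℕ) :
    Nat.card {p : ℕ → List (ℤ × ℤ) // FamValid F p} = ((famSet F 1).filter Dj).card := by
  classical
  have e : {p : ℕ → List (ℤ × ℤ) // FamValid F p} ≃
      {q // q ∈ (famSet F 1).filter Dj} := by
    refine ⟨fun P => ⟨fun k => P.1 k, ?_⟩, fun q => ⟨fun n => if h : n ∈ F then q.1 ⟨n, h⟩ else [], ?_⟩, ?_, ?_⟩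
    · obtain ⟨p, h1, h2, h3⟩ := P
      refine Finset.mem_filter.mpr ⟨?_, ?_⟩
      · rw [famSet, Fintype.mem_piFinset]
        intro k
        rw [mem_PF]
        have : ((1 : Equiv.Perm {x // x ∈ F}) k : ℕ) = (k : ℕ) := rfl
        rw [this]
        exact h1 k k.2
      · intro k l hkl q hq1 hq2
        exact h3 k k.2 l l.2 (fun h => hkl (Subtype.ext h)) q hq1 hq2
    · obtain ⟨q, hq⟩ := q
      obtain ⟨hq1, hq2⟩ := Finset.mem_filter.mp hq
      rw [famSet, Fintype.mem_piFinset] at hq1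
      refine ⟨?_, ?_, ?_⟩
      · intro k hk
        simp only [dif_pos hk]
        exact mem_PF.mp (hq1 ⟨k, hk⟩)
      · intro k hk
        simp only [dif_neg hk]
      · intro k hk l hl hkl v hv1 hv2
        simp only [dif_pos hk] at hv1
        simp only [dif_pos hl] at hv2
        exact hq2 ⟨k, hk⟩ ⟨l, hl⟩ (fun h => hkl (congrArg Subtype.val h)) v hv1 hv2
    · rintro ⟨p, h1, h2, h3⟩
      refine Subtype.ext ?_
      funext n
      by_cases hn : n ∈ F
      · simp only [dif_pos hn]
      · simp only [dif_neg hn]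
        exact (h2 n hn).symm
    · rintro ⟨q, hq⟩
      refine Subtype.ext ?_
      funext k
      simp only [dif_pos k.2]
  rw [Nat.card_congr e, Nat.card_eq_fintype_card, Fintype.card_coe]

/-- **The Lindström–Gessel–Viennot identity for one subset.** -/
theorem lgv_subset (F : Finset ℕ) :
    ((Nat.card {p : ℕ → List (ℤ × ℤ) // FamValid F p} : ℕ) : ℤ) =
      Matrix.det (Matrix.of fun i j : {x // x ∈ F} => (Stilde i ((j : ℕ) + 1) : ℤ)) := by
  rw [det_eq_signed_sum, signed_sum_eq_card, card_famvalid]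

end Paper20V

namespace Paper20V

open Equiv

/-- Sum over permutations fixing the complement of `T` equals a sum over
permutations of `T`. -/
lemma sum_perm_fix {n : ℕ} (T : Finset (Fin n)) (f : Fin n → Fin n → ℤ) :
    (∑ σ ∈ Finset.univ.filter (fun σ : Equiv.Perm (Fin n) => ∀ i, i ∉ T → σ i = i),
      ((Equiv.Perm.sign σ : ℤˣ) : ℤ) * ∏ i ∈ T, f (σ i) i) =
    ∑ τ : Equiv.Perm {x // x ∈ T},
      ((Equiv.Perm.sign τ : ℤˣ) : ℤ) * ∏ i : {x // x ∈ T}, f (τ i) i := by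
  classical
  refine (Finset.sum_bij (fun τ _ => Equiv.Perm.ofSubtype τ) ?_ ?_ ?_ ?_).symm
  · intro τ _
    rw [Finset.mem_filter]
    refine ⟨Finset.mem_univ _, fun i hi => Equiv.Perm.ofSubtype_apply_of_not_mem τ hi⟩
  · intro τ₁ _ τ₂ _ h
    have h' : Equiv.Perm.ofSubtype τ₁ = Equiv.Perm.ofSubtype τ₂ := h
    ext a
    have h1 : Equiv.Perm.ofSubtype τ₁ (a : Fin n) = Equiv.Perm.ofSubtype τ₂ (a : Fin n) :=
      Equiv.ext_iff.mp h' _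
    rw [Equiv.Perm.ofSubtype_apply_of_mem τ₁ a.2, Equiv.Perm.ofSubtype_apply_of_mem τ₂ a.2]
      at h1
    exact congrArg Fin.val h1
  · intro σ hσ
    obtain ⟨-, hfix⟩ := Finset.mem_filter.mp hσ
    have hiff : ∀ x : Fin n, x ∈ T ↔ σ x ∈ T := by
      intro x
      constructor
      · intro hx
        by_contra hc
        have h2 : σ (σ x) = σ x := hfix _ hc
        have h3 : σ x = x := σ.injective h2
        rw [h3] at hc
        exact hc hx
      · intro hx
        by_contra hc
        have := hfix _ hc
        rw [this] at hx
        exact hc hx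
    refine ⟨σ.subtypePerm (fun x => (hiff x).symm), Finset.mem_univ _, ?_⟩
    exact Equiv.Perm.ofSubtype_subtypePerm (fun x => (hiff x).symm) (fun x hx => by
      by_contra hc
      exact hx (hfix x hc))
  · intro τ _
    have hs : Equiv.Perm.sign (Equiv.Perm.ofSubtype τ) = Equiv.Perm.sign τ := by
      rw [Equiv.Perm.sign_ofSubtype]
    rw [hs]
    congr 1
    rw [← Finset.prod_coe_sort T (fun i => f (Equiv.Perm.ofSubtype τ i) i)]
    exact Finset.prod_congr rfl fun i _ => by
      rw [Equiv.Perm.ofSubtype_apply_of_mem τ i.2]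

/-- Expansion of `det (1 + M)` over principal minors. -/
lemma det_one_add_eq_sum {n : ℕ} (M : Matrix (Fin n) (Fin n) ℤ) :
    (1 + M).det =
      ∑ T ∈ (Finset.univ : Finset (Fin n)).powerset,
        Matrix.det (Matrix.of fun i j : {x // x ∈ T} => M i j) := by
  classical
  rw [Matrix.det_apply']
  simp only [Int.cast_id]
  have hexp : ∀ σ : Equiv.Perm (Fin n), (∏ i, (1 + M) (σ i) i) =
      ∑ T ∈ (Finset.univ : Finset (Fin n)).powerset,
        (∏ i ∈ T, M (σ i) i) * ∏ i ∈ Finset.univ \ T, (if σ i = i then (1:ℤ) else 0) := by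
    intro σ
    refine (Finset.prod_congr rfl ?_).trans (Finset.prod_add _ _ _)
    intro i _
    rw [Matrix.add_apply, Matrix.one_apply, add_comm]
  have h1 : ∑ σ : Equiv.Perm (Fin n), ((Equiv.Perm.sign σ : ℤˣ) : ℤ) * ∏ i, (1 + M) (σ i) i
      = ∑ σ : Equiv.Perm (Fin n), ∑ T ∈ (Finset.univ : Finset (Fin n)).powerset,
          ((Equiv.Perm.sign σ : ℤˣ) : ℤ) *
            ((∏ i ∈ T, M (σ i) i) * ∏ i ∈ Finset.univ \ T, (if σ i = i then (1:ℤ) else 0)) := by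
    refine Finset.sum_congr rfl fun σ _ => ?_
    rw [hexp σ, Finset.mul_sum]
  rw [h1, Finset.sum_comm]
  refine Finset.sum_congr rfl fun T hT => ?_
  rw [Matrix.det_apply']
  simp only [Matrix.of_apply, Int.cast_id]
  rw [← sum_perm_fix T (fun a b => M a b)]
  have h2 : ∀ σ : Equiv.Perm (Fin n),
      ((Equiv.Perm.sign σ : ℤˣ) : ℤ) *
        ((∏ i ∈ T, M (σ i) i) * ∏ i ∈ Finset.univ \ T, (if σ i = i then (1:ℤ) else 0)) =
      if (∀ i, i ∉ T → σ i = i) then ((Equiv.Perm.sign σ : ℤˣ) : ℤ) * ∏ i ∈ T, M (σ i) i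
      else 0 := by
    intro σ
    have hb : (∏ i ∈ Finset.univ \ T, (if σ i = i then (1:ℤ) else 0)) =
        if (∀ i, i ∉ T → σ i = i) then 1 else 0 := by
      rw [Finset.prod_boole]
      congr 1
      rw [eq_iff_iff]
      constructor
      · intro h i hi
        exact h i (Finset.mem_sdiff.mpr ⟨Finset.mem_univ _, hi⟩)
      · intro h i hi
        exact h i (Finset.mem_sdiff.mp hi).2
    rw [hb]
    by_cases hfix : ∀ i, i ∉ T → σ i = i
    · rw [if_pos hfix, if_pos hfix, mul_one]
    · rw [if_neg hfix, if_neg hfix, mul_zero, mul_zero]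
  rw [Finset.sum_congr rfl fun σ _ => h2 σ, Finset.sum_ite, Finset.sum_const_zero, add_zero]

end Paper20V

namespace Paper20V

lemma det_reindex_F {n : ℕ} (F : Finset ℕ) (hsub : ∀ m ∈ F, m < n) :
    Matrix.det (Matrix.of fun i j : {x // x ∈ F} => (Stilde i ((j : ℕ) + 1) : ℤ)) =
      Matrix.det (Matrix.of fun i j :
          {x // x ∈ Finset.univ.filter (fun x : Fin n => (x : ℕ) ∈ F)} =>
        (Matrix.of fun i j : Fin n => (Stilde i ((j : ℕ) + 1) : ℤ)) i j) := by
  let e : {x // x ∈ F} ≃ {x // x ∈ Finset.univ.filter (fun x : Fin n => (x : ℕ) ∈ F)} :=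
    { toFun := fun m => ⟨⟨(m : ℕ), hsub _ m.2⟩,
        Finset.mem_filter.mpr ⟨Finset.mem_univ _, m.2⟩⟩
      invFun := fun x => ⟨((x : Fin n) : ℕ), (Finset.mem_filter.mp x.2).2⟩
      left_inv := fun m => Subtype.ext rfl
      right_inv := fun x => Subtype.ext (Fin.ext rfl) }
  rw [← Matrix.det_submatrix_equiv_self e
    (Matrix.of fun i j : {x // x ∈ Finset.univ.filter (fun x : Fin n => (x : ℕ) ∈ F)} =>
      (Matrix.of fun i j : Fin n => (Stilde i ((j : ℕ) + 1) : ℤ)) i j)]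
  refine congrArg Matrix.det ?_
  ext i j
  rfl

theorem lgv_sum_eq_det_one_add_M (n : ℕ) (hn : 1 ≤ n) :
    ((∑ F ∈ (Finset.Icc 1 (n - 1)).powerset,
        Nat.card {p : ℕ → List (ℤ × ℤ) // FamValid F p} : ℕ) : ℤ) =
      Matrix.det (1 + Matrix.of fun i j : Fin n => (Stilde i ((j : ℕ) + 1) : ℤ)) := by
  classical
  rw [det_one_add_eq_sum]
  push_cast
  rw [Finset.sum_congr rfl (fun F _ => lgv_subset F)]
  rw [← Finset.sum_filter_add_sum_filter_not ((Finset.univ : Finset (Fin n)).powerset)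
    (fun T => (⟨0, hn⟩ : Fin n) ∈ T)]
  have hzero : ∀ T ∈ ((Finset.univ : Finset (Fin n)).powerset).filter
      (fun T => (⟨0, hn⟩ : Fin n) ∈ T),
      Matrix.det (Matrix.of fun i j : {x // x ∈ T} =>
        (Matrix.of fun i j : Fin n => (Stilde i ((j : ℕ) + 1) : ℤ)) i j) = 0 := by
    intro T hT
    obtain ⟨-, hzT⟩ := Finset.mem_filter.mp hT
    apply Matrix.det_eq_zero_of_row_eq_zero ⟨⟨0, hn⟩, hzT⟩
    intro j
    simp only [Matrix.of_apply]
    have h2 := Stilde_zero ((((j : {x // x ∈ T}) : Fin n) : ℕ) + 1) (by omega)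
    rw [h2]
    rfl
  rw [Finset.sum_congr rfl hzero, Finset.sum_const_zero, zero_add]
  refine Finset.sum_nbij' (fun F => Finset.univ.filter (fun x : Fin n => (x : ℕ) ∈ F))
    (fun T => T.image Fin.val) ?_ ?_ ?_ ?_ ?_
  · intro F hF
    rw [Finset.mem_filter]
    refine ⟨Finset.mem_powerset.mpr (Finset.subset_univ _), ?_⟩
    intro hzm
    rw [Finset.mem_filter] at hzm
    have h0 : ((⟨0, hn⟩ : Fin n) : ℕ) ∈ F := hzm.2
    have h1 := Finset.mem_powerset.mp hF h0
    rw [Finset.mem_Icc] at h1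
    have h2 : ((⟨0, hn⟩ : Fin n) : ℕ) = 0 := rfl
    omega
  · intro T hT
    obtain ⟨-, hzT⟩ := Finset.mem_filter.mp hT
    rw [Finset.mem_powerset]
    intro m hm
    rw [Finset.mem_image] at hm
    obtain ⟨x, hxT, hxm⟩ := hm
    have hx0 : (x : ℕ) ≠ 0 := by
      intro hc
      apply hzT
      have hxz : x = (⟨0, hn⟩ : Fin n) := Fin.ext (by simp [hc])
      rw [← hxz]
      exact hxT
    have hxn : (x : ℕ) < n := x.2
    rw [Finset.mem_Icc]
    omega
  · intro F hF
    ext m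
    simp only [Finset.mem_image, Finset.mem_filter, Finset.mem_univ, true_and]
    constructor
    · rintro ⟨x, hx, rfl⟩
      exact hx
    · intro hm
      have hmn : m < n := by
        have h1 := Finset.mem_powerset.mp hF hm
        rw [Finset.mem_Icc] at h1
        omega
      exact ⟨⟨m, hmn⟩, hm, rfl⟩
  · intro T hT
    ext x
    simp only [Finset.mem_filter, Finset.mem_univ, true_and, Finset.mem_image]
    constructor
    · rintro ⟨y, hy, hyx⟩
      have hxy : y = x := Fin.ext hyx
      rw [← hxy]
      exact hy
    · intro hx
      exact ⟨x, hx, rfl⟩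
  · intro F hF
    refine det_reindex_F F ?_
    intro m hm
    have h1 := Finset.mem_powerset.mp hF hm
    rw [Finset.mem_Icc] at h1
    omega

end Paper20V
end

section
/- Fix an integer n ≥ 1 and τ ∈ ℂ, and let i denote the imaginary unit. For 1 ≤ i',j ≤ n define K_{i',j} := [r^{i'−1} s^{j−1}]( 1/(1−rs) + 2r/((1−r)(1−r−s−rs)) + s^{n−1} · ((1+r)^{n−1}/(1−r)^n) · ((1+ir)/(1+i)) · ( (1+τ)/(1−τr) − 2/(1−r) ) ) and L_{i',j} := [r^{i'−1} s^{j−1}]( 1/(1−rs) + 2r/((1−r)(1−r−s−rs)) + s^{n−1} · ((1+r)^{n−1}/(1−r)^n) · r · ( (1+τ)/(1−τr) − 2/(1−r) ) ). Then K_{i',j} = L_{i',j} for all 1 ≤ i' ≤ n and 1 ≤ j ≤ n−1, and K_{i',n} = ((τ+i)/(1+i)) · L_{i',n} + ((τ−1)/(1+i)) · Σ_{j=1}^{n−1} L_{i',j} for all 1 ≤ i' ≤ n. -/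
open Finset

namespace Paper20V

/-- The common tail `s^{n-1} (1+r)^{n-1} (1-r)^{-n} ((1+τ)/(1-τr) - 2/(1-r))`. -/
noncomputable def tailPart (n : ℕ) (τ : ℂ) : MvPowerSeries (Fin 2) ℂ :=
  Ps ^ (n - 1) * (1 + Pr) ^ (n - 1) * ((1 - Pr) ^ n)⁻¹ *
    ((1 + Pc τ) * (1 - Pc τ * Pr)⁻¹ - 2 * (1 - Pr)⁻¹)

/-- The generating function of the matrix `K`. -/
noncomputable def Kser (n : ℕ) (τ : ℂ) : MvPowerSeries (Fin 2) ℂ :=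
  Gfun + (1 + Pc Complex.I * Pr) * Pc ((1 + Complex.I)⁻¹) * tailPart n τ

/-- The generating function of the matrix `L`. -/
noncomputable def Lser (n : ℕ) (τ : ℂ) : MvPowerSeries (Fin 2) ℂ :=
  Gfun + Pr * tailPart n τ


open MvPowerSeries

private lemma fin2_eq (d : Fin 2 →₀ ℕ) :
    d = Finsupp.single 0 (d 0) + Finsupp.single 1 (d 1) := by
  ext i
  fin_cases i <;> simp [Finsupp.single_apply]

private lemma cf_eq_coeff (d : Fin 2 →₀ ℕ) (F : MvPowerSeries (Fin 2) ℂ) :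
    MvPowerSeries.coeff d F = cf (d 0) (d 1) F := by
  rw [cf, ← fin2_eq]

private lemma cf_Ps_pow_mul (a b mm : ℕ) (F : MvPowerSeries (Fin 2) ℂ) :
    cf a b (Ps ^ mm * F) = if mm ≤ b then cf a (b - mm) F else 0 := by
  classical
  rw [cf, Ps, X_pow_eq, coeff_monomial_mul]
  have hle : Finsupp.single (1 : Fin 2) mm ≤
      Finsupp.single (0 : Fin 2) a + Finsupp.single 1 b ↔ mm ≤ b := by
    simp [Finsupp.le_def, Fin.forall_fin_two, Finsupp.single_apply]
  have hsub : (Finsupp.single (0 : Fin 2) a + Finsupp.single 1 b) - Finsupp.single 1 mm =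
      Finsupp.single (0 : Fin 2) a + Finsupp.single 1 (b - mm) := by
    ext i
    fin_cases i <;> simp [Finsupp.single_apply, Finsupp.tsub_apply]
  by_cases h : mm ≤ b
  · rw [if_pos (hle.mpr h), if_pos h, one_mul, hsub, cf]
  · rw [if_neg (fun hc => h (hle.mp hc)), if_neg h]

private lemma cf_Pr_pow_mul (a b mm : ℕ) (F : MvPowerSeries (Fin 2) ℂ) :
    cf a b (Pr ^ mm * F) = if mm ≤ a then cf (a - mm) b F else 0 := by
  classical
  rw [cf, Pr, X_pow_eq, coeff_monomial_mul]
  have hle : Finsupp.single (0 : Fin 2) mm ≤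
      Finsupp.single (0 : Fin 2) a + Finsupp.single 1 b ↔ mm ≤ a := by
    simp [Finsupp.le_def, Fin.forall_fin_two, Finsupp.single_apply]
  have hsub : (Finsupp.single (0 : Fin 2) a + Finsupp.single 1 b) - Finsupp.single 0 mm =
      Finsupp.single (0 : Fin 2) (a - mm) + Finsupp.single 1 b := by
    ext i
    fin_cases i <;> simp [Finsupp.single_apply, Finsupp.tsub_apply]
  by_cases h : mm ≤ a
  · rw [if_pos (hle.mpr h), if_pos h, one_mul, hsub, cf]
  · rw [if_neg (fun hc => h (hle.mp hc)), if_neg h]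

private lemma cf_Ps_vanish {b mm : ℕ} (h : b < mm) (a : ℕ) (F : MvPowerSeries (Fin 2) ℂ) :
    cf a b (Ps ^ mm * F) = 0 := by
  rw [cf_Ps_pow_mul, if_neg (by omega)]

private lemma cf_Pr_vanish {a mm : ℕ} (h : a < mm) (b : ℕ) (F : MvPowerSeries (Fin 2) ℂ) :
    cf a b (Pr ^ mm * F) = 0 := by
  rw [cf_Pr_pow_mul, if_neg (by omega)]

private lemma cf_Ps_shift (a mm : ℕ) (F : MvPowerSeries (Fin 2) ℂ) :
    cf a mm (Ps ^ mm * F) = cf a 0 F := by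
  rw [cf_Ps_pow_mul, if_pos le_rfl, Nat.sub_self]

private lemma cf_Ps_mul_zero (a : ℕ) (F : MvPowerSeries (Fin 2) ℂ) :
    cf a 0 (Ps * F) = 0 := by
  rw [← pow_one Ps]; exact cf_Ps_vanish Nat.zero_lt_one a F

private lemma cf_Ps_mul_succ (a b : ℕ) (F : MvPowerSeries (Fin 2) ℂ) :
    cf a (b + 1) (Ps * F) = cf a b F := by
  rw [← pow_one Ps, cf_Ps_pow_mul, if_pos (by omega), Nat.add_sub_cancel]

/-- `F` only involves the variable `r`. -/
private def Ronly (F : MvPowerSeries (Fin 2) ℂ) : Prop :=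
  ∀ a b : ℕ, b ≠ 0 → cf a b F = 0

private lemma Ronly_one : Ronly 1 := by
  intro a b hb
  rw [cf, MvPowerSeries.coeff_one, if_neg]
  intro h
  have := congrArg (fun f : Fin 2 →₀ ℕ => f 1) h
  simp [Finsupp.single_apply] at this
  exact hb this

private lemma Ronly_Pr : Ronly Pr := by
  intro a b hb
  rw [cf, Pr, MvPowerSeries.X, MvPowerSeries.coeff_monomial, if_neg]
  intro h
  have := congrArg (fun f : Fin 2 →₀ ℕ => f 1) h
  simp [Finsupp.single_apply] at this
  exact hb this

private lemma Ronly_Pc (z : ℂ) : Ronly (Pc z) := by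
  intro a b hb
  rw [cf, Pc, MvPowerSeries.coeff_C, if_neg]
  intro h
  have := congrArg (fun f : Fin 2 →₀ ℕ => f 1) h
  simp [Finsupp.single_apply] at this
  exact hb this

private lemma Ronly_add {F G : MvPowerSeries (Fin 2) ℂ} (hF : Ronly F) (hG : Ronly G) :
    Ronly (F + G) := by
  intro a b hb
  rw [cf, map_add, ← cf, ← cf, hF a b hb, hG a b hb, add_zero]

private lemma Ronly_mul {F G : MvPowerSeries (Fin 2) ℂ} (hF : Ronly F) (hG : Ronly G) :
    Ronly (F * G) := by
  classical
  intro a b hb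
  rw [cf, MvPowerSeries.coeff_mul]
  apply Finset.sum_eq_zero
  intro p hp
  have hpd := Finset.HasAntidiagonal.mem_antidiagonal.mp hp
  have h1 : p.1 1 + p.2 1 = b := by
    have := congrArg (fun f : Fin 2 →₀ ℕ => f 1) hpd
    simpa [Finsupp.single_apply] using this
  by_cases hc : p.1 1 = 0
  · rw [cf_eq_coeff p.2, hG _ _ (by omega), mul_zero]
  · rw [cf_eq_coeff p.1, hF _ _ hc, zero_mul]

private lemma Ronly_pow {F : MvPowerSeries (Fin 2) ℂ} (hF : Ronly F) (k : ℕ) :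
    Ronly (F ^ k) := by
  induction k with
  | zero => simpa using Ronly_one
  | succ k ih => rw [pow_succ]; exact Ronly_mul ih hF

/-- If `F = 1 + Pr * (E * F)` with `E` r-only, then `F` is r-only. -/
private lemma Ronly_of_rec {E F : MvPowerSeries (Fin 2) ℂ} (hE : Ronly E)
    (hF : F = 1 + Pr * (E * F)) : Ronly F := by
  classical
  intro a
  induction a using Nat.strong_induction_on with
  | _ a ih =>
    intro b hb
    conv_lhs => rw [hF]
    rw [cf, map_add, ← cf, ← cf, Ronly_one a b hb, zero_add,
      ← pow_one Pr, cf_Pr_pow_mul]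
    by_cases ha : 1 ≤ a
    · rw [if_pos ha, cf, MvPowerSeries.coeff_mul]
      apply Finset.sum_eq_zero
      intro p hp
      have hpd := Finset.HasAntidiagonal.mem_antidiagonal.mp hp
      have h1 : p.1 1 + p.2 1 = b := by
        have := congrArg (fun f : Fin 2 →₀ ℕ => f 1) hpd
        simpa [Finsupp.single_apply] using this
      have h0 : p.1 0 + p.2 0 = a - 1 := by
        have := congrArg (fun f : Fin 2 →₀ ℕ => f 0) hpd
        simpa [Finsupp.single_apply] using this
      by_cases hc : p.1 1 = 0
      · rw [cf_eq_coeff p.2, ih (p.2 0) (by omega) _ (by omega), mul_zero]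
      · rw [cf_eq_coeff p.1, hE _ _ hc, zero_mul]
    · rw [if_neg ha]

private lemma eq_of_mul_eq_one {A B C : MvPowerSeries (Fin 2) ℂ}
    (h1 : A * B = 1) (h2 : A * C = 1) : B = C := by
  calc B = B * (A * C) := by rw [h2, mul_one]
  _ = C * (A * B) := by ring
  _ = C := by rw [h1, mul_one]



private lemma cf_add (a b : ℕ) (F G : MvPowerSeries (Fin 2) ℂ) :
    cf a b (F + G) = cf a b F + cf a b G := map_add _ _ _

private lemma cf_sub (a b : ℕ) (F G : MvPowerSeries (Fin 2) ℂ) :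
    cf a b (F - G) = cf a b F - cf a b G := map_sub _ _ _

private lemma cf_Pc_mul (a b : ℕ) (zc : ℂ) (F : MvPowerSeries (Fin 2) ℂ) :
    cf a b (Pc zc * F) = zc * cf a b F := by
  rw [cf, Pc, MvPowerSeries.coeff_C_mul, cf]

private lemma lemF {z : MvPowerSeries (Fin 2) ℂ} (hz : (1 - Pr * Ps) * z = 1) :
    ∀ b : ℕ, ∀ R : MvPowerSeries (Fin 2) ℂ, Ronly R → ∀ a : ℕ,
      cf a b (R * z) = cf a 0 (R * Pr ^ b) := by
  have hrec : z = 1 + Ps * (Pr * z) := by linear_combination hz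
  intro b
  induction b with
  | zero =>
    intro R hR a
    conv_lhs => rw [hrec]
    rw [show R * (1 + Ps * (Pr * z)) = R + Ps * (Pr * R * z) from by ring,
      cf_add, cf_Ps_mul_zero, add_zero, pow_zero, mul_one]
  | succ b ih =>
    intro R hR a
    conv_lhs => rw [hrec]
    rw [show R * (1 + Ps * (Pr * z)) = R + Ps * ((Pr * R) * z) from by ring,
      cf_add, hR a (b + 1) b.succ_ne_zero, zero_add,
      cf_Ps_mul_succ, ih (Pr * R) (Ronly_mul Ronly_Pr hR) a,
      show (Pr * R) * Pr ^ b = R * Pr ^ (b + 1) from by ring]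

private lemma lemE {v y : MvPowerSeries (Fin 2) ℂ} (hv : (1 - Pr) * v = 1)
    (hy : (1 - Pr - Ps - Pr * Ps) * y = 1) :
    ∀ b : ℕ, ∀ R : MvPowerSeries (Fin 2) ℂ, Ronly R → ∀ a : ℕ,
      cf a b (R * y) = cf a 0 (R * ((1 + Pr) ^ b * v ^ (b + 1))) := by
  have hRv : Ronly v := Ronly_of_rec Ronly_one (by linear_combination hv)
  have h2 : (1 - Pr - Ps - Pr * Ps) * (v * (1 + Ps * ((1 + Pr) * y))) = 1 := by
    linear_combination Ps * (1 + Pr) * v * hy + hv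
  have hrec : y = v * (1 + Ps * ((1 + Pr) * y)) := eq_of_mul_eq_one hy h2
  intro b
  induction b with
  | zero =>
    intro R hR a
    conv_lhs => rw [hrec]
    rw [show R * (v * (1 + Ps * ((1 + Pr) * y))) = R * v + Ps * ((1 + Pr) * (R * v) * y)
        from by ring,
      cf_add, cf_Ps_mul_zero, add_zero,
      show R * ((1 + Pr) ^ 0 * v ^ (0 + 1)) = R * v from by ring]
  | succ b ih =>
    intro R hR a
    conv_lhs => rw [hrec]
    rw [show R * (v * (1 + Ps * ((1 + Pr) * y))) = R * v + Ps * (((1 + Pr) * (R * v)) * y)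
        from by ring,
      cf_add, Ronly_mul hR hRv a (b + 1) b.succ_ne_zero, zero_add,
      cf_Ps_mul_succ,
      ih ((1 + Pr) * (R * v))
        (Ronly_mul (Ronly_add Ronly_one Ronly_Pr) (Ronly_mul hR hRv)) a,
      show ((1 + Pr) * (R * v)) * ((1 + Pr) ^ b * v ^ (b + 1)) =
        R * ((1 + Pr) ^ (b + 1) * v ^ (b + 1 + 1)) from by ring]

private lemma geom {v : MvPowerSeries (Fin 2) ℂ} (hv : (1 - Pr) * v = 1) (M : ℕ) :
    ∑ b ∈ Finset.range M, (Pr ^ b + 2 * Pr * v * ((1 + Pr) ^ b * v ^ (b + 1))) =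
      (1 + Pr) ^ M * v ^ (M + 1) - Pr ^ M * v := by
  induction M with
  | zero => rw [Finset.sum_range_zero]; ring
  | succ M ih =>
    rw [Finset.sum_range_succ, ih]
    linear_combination (-(Pr ^ M + (1 + Pr) ^ M * v ^ (M + 1))) * hv

private lemma IIa {v w : MvPowerSeries (Fin 2) ℂ} (τ : ℂ) (hv : (1 - Pr) * v = 1)
    (hw : (1 - Pc τ * Pr) * w = 1) (m : ℕ) :
    (1 - Pc τ * Pr) * ((1 + Pr) ^ m * v ^ (m + 1) * ((1 + Pc τ) * w - 2 * v)) =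
      (Pc τ - 1) * ((1 + Pr) ^ (m + 1) * v ^ (m + 2)) := by
  linear_combination ((1 + Pc τ) * ((1 + Pr) ^ m * v ^ (m + 1))) * hw -
    ((1 + Pc τ) * ((1 + Pr) ^ m * v ^ (m + 1))) * hv

/-- `K_{i',j} = L_{i',j}` for `j ≤ n-1`, and
`K_{i',n} = ((τ+i)/(1+i)) L_{i',n} + ((τ-1)/(1+i)) Σ_{j=1}^{n-1} L_{i',j}`. -/
theorem K_eq_L_relations (n : ℕ) (hn : 1 ≤ n) (τ : ℂ) :
    (∀ a b : Fin n, (b : ℕ) < n - 1 → cf a b (Kser n τ) = cf a b (Lser n τ)) ∧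
    (∀ a : Fin n, cf a (n - 1) (Kser n τ) =
      (τ + Complex.I) / (1 + Complex.I) * cf a (n - 1) (Lser n τ) +
      (τ - 1) / (1 + Complex.I) * ∑ b ∈ Finset.range (n - 1), cf a b (Lser n τ)) := by
  obtain ⟨m, rfl⟩ : ∃ m, n = m + 1 := ⟨n - 1, by omega⟩
  simp only [Nat.add_sub_cancel]
  have hI : (1 : ℂ) + Complex.I ≠ 0 := by
    intro h
    have := congrArg Complex.im h
    simp at this
  have hv : (1 - Pr) * (1 - Pr)⁻¹ = 1 :=
    MvPowerSeries.mul_inv_cancel _ (by simp [Pr])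
  have hy : (1 - Pr - Ps - Pr * Ps) * (1 - Pr - Ps - Pr * Ps)⁻¹ = 1 :=
    MvPowerSeries.mul_inv_cancel _ (by simp [Pr, Ps])
  have hz : (1 - Pr * Ps) * (1 - Pr * Ps)⁻¹ = 1 :=
    MvPowerSeries.mul_inv_cancel _ (by simp [Pr, Ps])
  have hw : (1 - Pc τ * Pr) * (1 - Pc τ * Pr)⁻¹ = 1 :=
    MvPowerSeries.mul_inv_cancel _ (by simp [Pr, Pc])
  have hvn : ((1 - Pr) ^ (m + 1))⁻¹ = ((1 - Pr)⁻¹) ^ (m + 1) := by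
    rw [MvPowerSeries.inv_eq_iff_mul_eq_one (by simp [Pr]), ← mul_pow,
      show (1 - Pr)⁻¹ * (1 - Pr) = 1 from by rw [mul_comm]; exact hv, one_pow]
  have hGfun : Gfun = 1 * (1 - Pr * Ps)⁻¹ +
      (2 * Pr * (1 - Pr)⁻¹) * (1 - Pr - Ps - Pr * Ps)⁻¹ := by
    unfold Gfun
    rw [MvPowerSeries.mul_inv_rev]
    ring
  set W : MvPowerSeries (Fin 2) ℂ :=
    (1 + Pr) ^ m * ((1 - Pr)⁻¹) ^ (m + 1) *
      ((1 + Pc τ) * (1 - Pc τ * Pr)⁻¹ - 2 * (1 - Pr)⁻¹) with hWdef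
  have htail : tailPart (m + 1) τ = Ps ^ m * W := by
    rw [hWdef]
    unfold tailPart
    rw [Nat.add_sub_cancel, hvn]
    ring
  constructor
  · intro a b hb
    simp only [Kser, Lser]
    rw [htail, cf_add, cf_add]
    congr 1
    rw [show (1 + Pc Complex.I * Pr) * Pc ((1 + Complex.I)⁻¹) * (Ps ^ m * W) =
        Ps ^ m * ((1 + Pc Complex.I * Pr) * Pc ((1 + Complex.I)⁻¹) * W) from by ring,
      cf_Ps_vanish hb,
      show Pr * (Ps ^ m * W) = Ps ^ m * (Pr * W) from by ring,
      cf_Ps_vanish hb]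
  · intro a
    have ha : (a : ℕ) < m + 1 := a.isLt
    have hRv : Ronly ((1 - Pr)⁻¹) := Ronly_of_rec Ronly_one (by linear_combination hv)
    have hR2 : Ronly (2 * Pr * (1 - Pr)⁻¹) := by
      rw [show (2 : MvPowerSeries (Fin 2) ℂ) = 1 + 1 from by norm_num]
      exact Ronly_mul (Ronly_mul (Ronly_add Ronly_one Ronly_one) Ronly_Pr) hRv
    have hGb : ∀ b : ℕ, cf (a : ℕ) b Gfun =
        cf a 0 (Pr ^ b + 2 * Pr * (1 - Pr)⁻¹ * ((1 + Pr) ^ b * ((1 - Pr)⁻¹) ^ (b + 1))) := by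
      intro b
      rw [hGfun, cf_add, lemF hz b 1 Ronly_one a, lemE hv hy b _ hR2 a, ← cf_add,
        one_mul]
    have hCore : ∑ b ∈ Finset.range (m + 1), cf (a : ℕ) b Gfun =
        cf (a : ℕ) 0 ((1 + Pr) ^ (m + 1) * ((1 - Pr)⁻¹) ^ (m + 2)) := by
      calc ∑ b ∈ Finset.range (m + 1), cf (a : ℕ) b Gfun
          = ∑ b ∈ Finset.range (m + 1), cf (a : ℕ) 0
            (Pr ^ b + 2 * Pr * (1 - Pr)⁻¹ * ((1 + Pr) ^ b * ((1 - Pr)⁻¹) ^ (b + 1))) :=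
          Finset.sum_congr rfl fun b _ => hGb b
        _ = cf (a : ℕ) 0 (∑ b ∈ Finset.range (m + 1),
            (Pr ^ b + 2 * Pr * (1 - Pr)⁻¹ * ((1 + Pr) ^ b * ((1 - Pr)⁻¹) ^ (b + 1)))) := by
          rw [cf, map_sum]
          rfl
        _ = cf (a : ℕ) 0 ((1 + Pr) ^ (m + 1) * ((1 - Pr)⁻¹) ^ (m + 1 + 1) -
            Pr ^ (m + 1) * (1 - Pr)⁻¹) := by rw [geom hv (m + 1)]
        _ = cf (a : ℕ) 0 ((1 + Pr) ^ (m + 1) * ((1 - Pr)⁻¹) ^ (m + 2)) := by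
          rw [cf_sub, cf_Pr_vanish ha, sub_zero]
    have hK : cf (a : ℕ) m (Kser (m + 1) τ) = cf (a : ℕ) m Gfun +
        ((1 + Complex.I)⁻¹ * cf (a : ℕ) 0 W +
          Complex.I * ((1 + Complex.I)⁻¹ * cf (a : ℕ) 0 (Pr * W))) := by
      simp only [Kser]
      rw [htail, cf_add]
      congr 1
      rw [show (1 + Pc Complex.I * Pr) * Pc ((1 + Complex.I)⁻¹) * (Ps ^ m * W) =
          Ps ^ m * (Pc ((1 + Complex.I)⁻¹) * W +
            Pc Complex.I * (Pc ((1 + Complex.I)⁻¹) * (Pr * W))) from by ring,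
        cf_Ps_shift, cf_add, cf_Pc_mul, cf_Pc_mul, cf_Pc_mul]
    have hL : cf (a : ℕ) m (Lser (m + 1) τ) = cf (a : ℕ) m Gfun + cf (a : ℕ) 0 (Pr * W) := by
      simp only [Lser]
      rw [htail, cf_add, show Pr * (Ps ^ m * W) = Ps ^ m * (Pr * W) from by ring, cf_Ps_shift]
    have hS : ∑ b ∈ Finset.range m, cf (a : ℕ) b (Lser (m + 1) τ) =
        ∑ b ∈ Finset.range m, cf (a : ℕ) b Gfun := by
      refine Finset.sum_congr rfl fun b hb => ?_
      have hbm : b < m := Finset.mem_range.mp hb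
      simp only [Lser]
      rw [htail, cf_add, show Pr * (Ps ^ m * W) = Ps ^ m * (Pr * W) from by ring,
        cf_Ps_vanish hbm, add_zero]
    have hKey : cf (a : ℕ) 0 W - τ * cf (a : ℕ) 0 (Pr * W) =
        (τ - 1) * (∑ b ∈ Finset.range m, cf (a : ℕ) b Gfun + cf (a : ℕ) m Gfun) := by
      have e1 : cf (a : ℕ) 0 W - τ * cf (a : ℕ) 0 (Pr * W) =
          cf (a : ℕ) 0 ((1 - Pc τ * Pr) * W) := by
        rw [show (1 - Pc τ * Pr) * W = W - Pc τ * (Pr * W) from by ring,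
          cf_sub, cf_Pc_mul]
      rw [e1, hWdef, IIa τ hv hw m,
        show (Pc τ - 1) * ((1 + Pr) ^ (m + 1) * ((1 - Pr)⁻¹) ^ (m + 2)) =
          Pc τ * ((1 + Pr) ^ (m + 1) * ((1 - Pr)⁻¹) ^ (m + 2)) -
          (1 + Pr) ^ (m + 1) * ((1 - Pr)⁻¹) ^ (m + 2) from by ring,
        cf_sub, cf_Pc_mul, ← hCore, ← Finset.sum_range_succ]
      ring
    rw [hK, hL, hS]
    have hii : (1 + Complex.I) * (1 + Complex.I)⁻¹ = 1 := mul_inv_cancel₀ hI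
    linear_combination (1 + Complex.I)⁻¹ * hKey - (cf (a : ℕ) m Gfun) * hii


end Paper20V
end

section
/- Let F be a field, n ≥ 1, let z_1, …, z_n ∈ F be pairwise distinct, w_1, …, w_n ∈ F pairwise distinct, and let f : F × F → F be any function. Then det_{1≤i,j≤n}( f(z_i, w_j) ) = ( Π_{1≤i<j≤n} (z_j − z_i)(w_j − w_i) ) · det_{1≤i,j≤n}( F_{i,j} ), where F_{i,j} := Σ_{k=1}^{i} Σ_{l=1}^{j} f(z_k, w_l) / ( Π_{1≤k'≤i, k'≠k} (z_k − z_{k'}) · Π_{1≤l'≤j, l'≠l} (w_l − w_{l'}) ). -/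
open scoped Matrix

section Aux

variable {F : Type*} [Field F]

/-- Lower-triangular matrix of inverse Newton denominators. -/
def triNewton (n : ℕ) (z : ℕ → F) : Matrix (Fin n) (Fin n) F :=
  Matrix.of fun i k => if (k : ℕ) ≤ (i : ℕ) then
    (∏ k' ∈ (Finset.Icc 1 ((i : ℕ) + 1)).erase ((k : ℕ) + 1),
      (z ((k : ℕ) + 1) - z k'))⁻¹ else 0

lemma sum_fin_ite (n : ℕ) (i : Fin n) (g : ℕ → F) :
    (∑ k : Fin n, if (k : ℕ) ≤ (i : ℕ) then g ((k : ℕ) + 1) else 0)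
      = ∑ k ∈ Finset.Icc 1 ((i : ℕ) + 1), g k := by
  rw [Fin.sum_univ_eq_sum_range (fun m => if m ≤ (i : ℕ) then g (m + 1) else 0) n]
  rw [← Finset.Ico_add_one_right_eq_Icc, Finset.sum_Ico_eq_sum_range,
    show (i:ℕ) + 1 + 1 - 1 = (i:ℕ) + 1 from rfl]
  rw [← Finset.sum_subset (Finset.range_subset_range.2 (by omega : (i : ℕ) + 1 ≤ n))
      (fun x _ hx => if_neg (by simp only [Finset.mem_range] at hx; omega))]
  refine Finset.sum_congr rfl fun x hx => ?_
  simp only [Finset.mem_range] at hx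
  rw [if_pos (by omega), Nat.add_comm 1 x]

lemma prod_fin_icc (n : ℕ) (g : ℕ → F) :
    (∏ i : Fin n, g ((i : ℕ) + 1)) = ∏ j ∈ Finset.Icc 1 n, g j := by
  rw [Fin.prod_univ_eq_prod_range (fun m => g (m + 1)) n]
  rw [← Finset.Ico_add_one_right_eq_Icc, Finset.prod_Ico_eq_prod_range,
    show n + 1 - 1 = n from rfl]
  exact Finset.prod_congr rfl fun x _ => by rw [Nat.add_comm 1 x]

lemma triNewton_det (n : ℕ) (z : ℕ → F) :
    (triNewton n z).det
      = (∏ j ∈ Finset.Icc 1 n, ∏ i ∈ Finset.Ico 1 j, (z j - z i))⁻¹ := by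
  have htri : (triNewton n z).BlockTriangular OrderDual.toDual := by
    intro i k h
    have : (i : ℕ) < (k : ℕ) := by
      simpa using (OrderDual.toDual_lt_toDual.1 h : (i : Fin n) < k)
    exact if_neg (by omega)
  rw [Matrix.det_of_lowerTriangular _ htri]
  have : ∀ i : Fin n, triNewton n z i i
      = (∏ k' ∈ Finset.Ico 1 ((i : ℕ) + 1), (z ((i : ℕ) + 1) - z k'))⁻¹ := by
    intro i
    simp only [triNewton, Matrix.of_apply, le_refl, if_pos, Finset.Icc_erase_right]
  simp only [this]
  rw [Finset.prod_inv_distrib]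
  rw [prod_fin_icc n (fun m => ∏ k' ∈ Finset.Ico 1 m, (z m - z k'))]

end Aux

/-- The divided-difference form of a determinant: for pairwise
distinct `z_1, …, z_n` and pairwise distinct `w_1, …, w_n` in a field `F` and any
`f : F × F → F`,
`det(f(z_i, w_j)) = (Π_{i<j} (z_j - z_i)(w_j - w_i)) · det(f[z_1..z_i][w_1..w_j])`. -/
theorem det_eq_prod_mul_det_dividedDifferences
    (F : Type*) [Field F] (n : ℕ) (hn : 1 ≤ n) (z w : ℕ → F)
    (hz : ∀ a ∈ Finset.Icc 1 n, ∀ b ∈ Finset.Icc 1 n, a ≠ b → z a ≠ z b)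
    (hw : ∀ a ∈ Finset.Icc 1 n, ∀ b ∈ Finset.Icc 1 n, a ≠ b → w a ≠ w b)
    (f : F → F → F) :
    Matrix.det (Matrix.of fun i j : Fin n => f (z ((i : ℕ) + 1)) (w ((j : ℕ) + 1))) =
      (∏ j ∈ Finset.Icc 1 n, ∏ i ∈ Finset.Ico 1 j, (z j - z i) * (w j - w i)) *
      Matrix.det (Matrix.of fun i j : Fin n =>
        ∑ k ∈ Finset.Icc 1 ((i : ℕ) + 1), ∑ l ∈ Finset.Icc 1 ((j : ℕ) + 1),
          f (z k) (w l) /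
            ((∏ k' ∈ (Finset.Icc 1 ((i : ℕ) + 1)).erase k, (z k - z k')) *
             (∏ l' ∈ (Finset.Icc 1 ((j : ℕ) + 1)).erase l, (w l - w l')))) := by
  classical
  set L := triNewton n z with hLdef
  set R := triNewton n w with hRdef
  set A : Matrix (Fin n) (Fin n) F :=
    Matrix.of fun i j : Fin n => f (z ((i : ℕ) + 1)) (w ((j : ℕ) + 1)) with hAdef
  -- the divided-difference matrix is L * A * Rᵀ
  have key : (Matrix.of fun i j : Fin n =>
        ∑ k ∈ Finset.Icc 1 ((i : ℕ) + 1), ∑ l ∈ Finset.Icc 1 ((j : ℕ) + 1),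
          f (z k) (w l) /
            ((∏ k' ∈ (Finset.Icc 1 ((i : ℕ) + 1)).erase k, (z k - z k')) *
             (∏ l' ∈ (Finset.Icc 1 ((j : ℕ) + 1)).erase l, (w l - w l'))))
      = L * A * Rᵀ := by
    ext i j
    simp only [Matrix.of_apply]
    show _ = (L * A * Rᵀ) i j
    have h1 : (L * A * Rᵀ) i j
        = ∑ k : Fin n, L i k * ∑ l : Fin n, A k l * R j l := by
      simp only [Matrix.mul_apply, Matrix.transpose_apply, Finset.sum_mul, Finset.mul_sum]
      rw [Finset.sum_comm]
      exact Finset.sum_congr rfl fun k _ => Finset.sum_congr rfl fun l _ => by ring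
    rw [h1]
    have h2 : ∀ k : Fin n, L i k * ∑ l : Fin n, A k l * R j l
        = if (k : ℕ) ≤ (i : ℕ) then
            ((∏ k' ∈ (Finset.Icc 1 ((i : ℕ) + 1)).erase ((k : ℕ) + 1),
              (z ((k : ℕ) + 1) - z k'))⁻¹ *
              ∑ l : Fin n, f (z ((k : ℕ) + 1)) (w ((l : ℕ) + 1)) * R j l) else 0 := by
      intro k
      rw [hLdef]
      simp only [triNewton, Matrix.of_apply, hAdef, ite_mul, zero_mul]
    simp only [h2]
    rw [sum_fin_ite n i (fun m =>
      ((∏ k' ∈ (Finset.Icc 1 ((i : ℕ) + 1)).erase m, (z m - z k'))⁻¹ *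
        ∑ l : Fin n, f (z m) (w ((l : ℕ) + 1)) * R j l))]
    symm
    apply Finset.sum_congr rfl
    intro k _
    have h3 : ∀ l : Fin n, f (z k) (w ((l : ℕ) + 1)) * R j l
        = if (l : ℕ) ≤ (j : ℕ) then
            (f (z k) (w ((l : ℕ) + 1)) *
              (∏ l' ∈ (Finset.Icc 1 ((j : ℕ) + 1)).erase ((l : ℕ) + 1),
                (w ((l : ℕ) + 1) - w l'))⁻¹) else 0 := by
      intro l
      rw [hRdef]
      simp only [triNewton, Matrix.of_apply, mul_ite, mul_zero]
    simp only [h3]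
    rw [sum_fin_ite n j (fun m =>
      f (z k) (w m) *
        (∏ l' ∈ (Finset.Icc 1 ((j : ℕ) + 1)).erase m, (w m - w l'))⁻¹)]
    rw [Finset.mul_sum]
    refine Finset.sum_congr rfl fun l _ => ?_
    rw [div_eq_mul_inv, mul_inv]
    ring
  -- nonvanishing of the Vandermonde-type products
  have hQz : (∏ j ∈ Finset.Icc 1 n, ∏ i ∈ Finset.Ico 1 j, (z j - z i)) ≠ 0 := by
    rw [Finset.prod_ne_zero_iff]
    intro j hj
    rw [Finset.prod_ne_zero_iff]
    intro i hi
    rw [Finset.mem_Icc] at hj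
    rw [Finset.mem_Ico] at hi
    exact sub_ne_zero.2 (hz j (Finset.mem_Icc.2 ⟨hj.1, hj.2⟩)
      i (Finset.mem_Icc.2 ⟨hi.1, by omega⟩) (by omega))
  have hQw : (∏ j ∈ Finset.Icc 1 n, ∏ i ∈ Finset.Ico 1 j, (w j - w i)) ≠ 0 := by
    rw [Finset.prod_ne_zero_iff]
    intro j hj
    rw [Finset.prod_ne_zero_iff]
    intro i hi
    rw [Finset.mem_Icc] at hj
    rw [Finset.mem_Ico] at hi
    exact sub_ne_zero.2 (hw j (Finset.mem_Icc.2 ⟨hj.1, hj.2⟩)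
      i (Finset.mem_Icc.2 ⟨hi.1, by omega⟩) (by omega))
  have hprod : (∏ j ∈ Finset.Icc 1 n, ∏ i ∈ Finset.Ico 1 j, (z j - z i) * (w j - w i))
      = (∏ j ∈ Finset.Icc 1 n, ∏ i ∈ Finset.Ico 1 j, (z j - z i)) *
        (∏ j ∈ Finset.Icc 1 n, ∏ i ∈ Finset.Ico 1 j, (w j - w i)) := by
    rw [← Finset.prod_mul_distrib]
    exact Finset.prod_congr rfl fun j _ => Finset.prod_mul_distrib
  rw [key, hprod, Matrix.det_mul, Matrix.det_mul, Matrix.det_transpose,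
    hLdef, hRdef, triNewton_det, triNewton_det]
  field_simp
end

section
/- Let F be a field, n ≥ 1, let z_1, …, z_n ∈ F be pairwise distinct, let w_1, …, w_{n−1} ∈ F be pairwise distinct, and let w_n ∈ F and f : F × F → F be arbitrary. Then det_{1≤i,j≤n}( f(z_i, w_j) ) = ( Π_{1≤i<j≤n} (z_j − z_i) · Π_{1≤i<j≤n−1} (w_j − w_i) ) · det_{1≤i,j≤n}( G_{i,j} ), where for j ≤ n−1, G_{i,j} := Σ_{k=1}^{i} Σ_{l=1}^{j} f(z_k, w_l) / ( Π_{1≤k'≤i, k'≠k} (z_k − z_{k'}) · Π_{1≤l'≤j, l'≠l} (w_l − w_{l'}) ), and G_{i,n} := Σ_{k=1}^{i} f(z_k, w_n) / Π_{1≤k'≤i, k'≠k} (z_k − z_{k'}). -/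
/-- The variant of the divided-difference determinant identity
in which only `w_1, …, w_{n-1}` are pairwise distinct and the last column is a
one-variable divided difference evaluated at the arbitrary point `w_n`. -/
theorem det_eq_prod_mul_det_dividedDifferences_lastColumn
    (F : Type*) [Field F] (n : ℕ) (hn : 1 ≤ n) (z w : ℕ → F)
    (hz : ∀ a ∈ Finset.Icc 1 n, ∀ b ∈ Finset.Icc 1 n, a ≠ b → z a ≠ z b)
    (hw : ∀ a ∈ Finset.Icc 1 (n - 1), ∀ b ∈ Finset.Icc 1 (n - 1), a ≠ b → w a ≠ w b)
    (f : F → F → F) :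
    Matrix.det (Matrix.of fun i j : Fin n => f (z ((i : ℕ) + 1)) (w ((j : ℕ) + 1))) =
      ((∏ j ∈ Finset.Icc 1 n, ∏ i ∈ Finset.Ico 1 j, (z j - z i)) *
       (∏ j ∈ Finset.Icc 1 (n - 1), ∏ i ∈ Finset.Ico 1 j, (w j - w i))) *
      Matrix.det (Matrix.of fun i j : Fin n =>
        if (j : ℕ) + 1 = n then
          ∑ k ∈ Finset.Icc 1 ((i : ℕ) + 1),
            f (z k) (w n) / ∏ k' ∈ (Finset.Icc 1 ((i : ℕ) + 1)).erase k, (z k - z k')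
        else
          ∑ k ∈ Finset.Icc 1 ((i : ℕ) + 1), ∑ l ∈ Finset.Icc 1 ((j : ℕ) + 1),
            f (z k) (w l) /
              ((∏ k' ∈ (Finset.Icc 1 ((i : ℕ) + 1)).erase k, (z k - z k')) *
               (∏ l' ∈ (Finset.Icc 1 ((j : ℕ) + 1)).erase l, (w l - w l')))) := by
  -- key reindexing lemma
  have key : ∀ (i : Fin n) (g : ℕ → F),
      (∑ k : Fin n, if (k : ℕ) ≤ (i : ℕ) then g ((k : ℕ) + 1) else 0) =
        ∑ k ∈ Finset.Icc 1 ((i : ℕ) + 1), g k := by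
    intro i g
    rw [Fin.sum_univ_eq_sum_range (fun k => if k ≤ (i : ℕ) then g (k + 1) else 0) n]
    rw [show Finset.Icc 1 ((i : ℕ) + 1) = Finset.Ico 1 ((i : ℕ) + 2) by
      exact (Finset.Ico_add_one_right_eq_Icc 1 ((i : ℕ) + 1)).symm]
    rw [Finset.sum_Ico_eq_sum_range]
    have sub : Finset.range ((i : ℕ) + 1) ⊆ Finset.range n :=
      Finset.range_subset_range.mpr (by omega)
    rw [← Finset.sum_subset sub (fun k _ hk => by
      rw [if_neg]; simp only [Finset.mem_range] at hk; omega)]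
    refine Finset.sum_congr rfl fun k hk => ?_
    simp only [Finset.mem_range] at hk
    rw [if_pos (by omega), Nat.add_comm 1 k]
  set A : Matrix (Fin n) (Fin n) F :=
    Matrix.of fun i j : Fin n => f (z ((i : ℕ) + 1)) (w ((j : ℕ) + 1)) with hA
  set L : Matrix (Fin n) (Fin n) F :=
    Matrix.of fun i k : Fin n => if (k : ℕ) ≤ (i : ℕ) then
      (∏ k' ∈ (Finset.Icc 1 ((i : ℕ) + 1)).erase ((k : ℕ) + 1),
        (z ((k : ℕ) + 1) - z k'))⁻¹ else 0 with hL
  set U : Matrix (Fin n) (Fin n) F :=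
    Matrix.of fun j l : Fin n => if (j : ℕ) + 1 = n then (if l = j then (1 : F) else 0)
      else (if (l : ℕ) ≤ (j : ℕ) then
        (∏ l' ∈ (Finset.Icc 1 ((j : ℕ) + 1)).erase ((l : ℕ) + 1),
          (w ((l : ℕ) + 1) - w l'))⁻¹ else 0) with hU
  -- the G matrix equals L * A * Uᵀ
  have hG : (Matrix.of fun i j : Fin n =>
        if (j : ℕ) + 1 = n then
          ∑ k ∈ Finset.Icc 1 ((i : ℕ) + 1),
            f (z k) (w n) / ∏ k' ∈ (Finset.Icc 1 ((i : ℕ) + 1)).erase k, (z k - z k')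
        else
          ∑ k ∈ Finset.Icc 1 ((i : ℕ) + 1), ∑ l ∈ Finset.Icc 1 ((j : ℕ) + 1),
            f (z k) (w l) /
              ((∏ k' ∈ (Finset.Icc 1 ((i : ℕ) + 1)).erase k, (z k - z k')) *
               (∏ l' ∈ (Finset.Icc 1 ((j : ℕ) + 1)).erase l, (w l - w l'))))
      = L * A * U.transpose := by
    ext i j
    simp only [Matrix.of_apply, Matrix.mul_apply, Matrix.transpose_apply]
    by_cases hj : (j : ℕ) + 1 = n
    · rw [if_pos hj]
      have : ∀ l : Fin n, (∑ k : Fin n, L i k * A k l) * U j l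
          = if l = j then (∑ k : Fin n, L i k * A k j) else 0 := by
        intro l
        simp only [hU, Matrix.of_apply, if_pos hj]
        split
        · next h => rw [h, mul_one]
        · rw [mul_zero]
      rw [Finset.sum_congr rfl fun l _ => this l, Finset.sum_ite_eq' Finset.univ j
        (fun _ => ∑ k : Fin n, L i k * A k j), if_pos (Finset.mem_univ j)]
      rw [← key i (fun k => f (z k) (w n) /
        ∏ k' ∈ (Finset.Icc 1 ((i : ℕ) + 1)).erase k, (z k - z k'))]
      refine Finset.sum_congr rfl fun k _ => ?_
      simp only [hL, hA, Matrix.of_apply, ite_mul, zero_mul]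
      rw [hj, div_eq_inv_mul]
    · rw [if_neg hj]
      rw [Finset.sum_comm]
      rw [← key j (fun l => ∑ k ∈ Finset.Icc 1 ((i : ℕ) + 1),
        f (z k) (w l) /
          ((∏ k' ∈ (Finset.Icc 1 ((i : ℕ) + 1)).erase k, (z k - z k')) *
           (∏ l' ∈ (Finset.Icc 1 ((j : ℕ) + 1)).erase l, (w l - w l'))))]
      refine Finset.sum_congr rfl fun l _ => ?_
      simp only [hU, Matrix.of_apply, if_neg hj, mul_ite, mul_zero]
      split
      · rw [← key i (fun k => f (z k) (w ((l : ℕ) + 1)) /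
          ((∏ k' ∈ (Finset.Icc 1 ((i : ℕ) + 1)).erase k, (z k - z k')) *
           (∏ l' ∈ (Finset.Icc 1 ((j : ℕ) + 1)).erase ((l : ℕ) + 1),
             (w ((l : ℕ) + 1) - w l'))))]
        rw [Finset.sum_mul]
        refine Finset.sum_congr rfl fun k _ => ?_
        simp only [hL, hA, Matrix.of_apply, ite_mul, zero_mul]
        split
        · rw [div_eq_inv_mul, mul_inv]
          ring
        · rfl
      · rfl
  have hLtri : L.BlockTriangular OrderDual.toDual := by
    intro a b h
    have : (a : ℕ) < (b : ℕ) := h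
    simp only [hL, Matrix.of_apply]
    rw [if_neg (by omega)]
  have hUtri : U.BlockTriangular OrderDual.toDual := by
    intro a b h
    have hab : (a : ℕ) < (b : ℕ) := h
    simp only [hU, Matrix.of_apply]
    split
    · rw [if_neg (by intro hc; rw [hc] at hab; omega)]
    · rw [if_neg (by omega)]
  have hprodZ : (∏ j ∈ Finset.Icc 1 n, ∏ i ∈ Finset.Ico 1 j, (z j - z i)) =
      ∏ i : Fin n, ∏ k' ∈ Finset.Ico 1 ((i : ℕ) + 1), (z ((i : ℕ) + 1) - z k') := by
    rw [show Finset.Icc 1 n = Finset.Ico 1 (n + 1) by rw [Finset.Ico_add_one_right_eq_Icc],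
      Finset.prod_Ico_eq_prod_range,
      Fin.prod_univ_eq_prod_range (fun i => ∏ k' ∈ Finset.Ico 1 (i + 1), (z (i + 1) - z k')) n]
    exact Finset.prod_congr rfl fun i _ => by rw [Nat.add_comm 1 i]
  have hprodW : (∏ j ∈ Finset.Icc 1 (n - 1), ∏ i ∈ Finset.Ico 1 j, (w j - w i)) =
      ∏ j ∈ Finset.range (n - 1), ∏ l' ∈ Finset.Ico 1 (j + 1), (w (j + 1) - w l') := by
    rw [show Finset.Icc 1 (n - 1) = Finset.Ico 1 (n - 1 + 1) by rw [Finset.Ico_add_one_right_eq_Icc],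
      Finset.prod_Ico_eq_prod_range]
    exact Finset.prod_congr rfl fun i _ => by rw [Nat.add_comm 1 i]
  have hdetL : L.det =
      (∏ j ∈ Finset.Icc 1 n, ∏ i ∈ Finset.Ico 1 j, (z j - z i))⁻¹ := by
    rw [Matrix.det_of_lowerTriangular L hLtri, hprodZ, ← Finset.prod_inv_distrib]
    refine Finset.prod_congr rfl fun i _ => ?_
    simp only [hL, Matrix.of_apply, if_pos (le_refl (i : ℕ))]
    rw [Finset.Icc_erase_right]
  have hdetU : U.det =
      (∏ j ∈ Finset.Icc 1 (n - 1), ∏ i ∈ Finset.Ico 1 j, (w j - w i))⁻¹ := by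
    set D : ℕ → F := fun j => if j + 1 = n then (1 : F)
      else (∏ l' ∈ (Finset.Icc 1 (j + 1)).erase (j + 1), (w (j + 1) - w l'))⁻¹ with hD
    have hdiag : ∀ j : Fin n, U j j = D (j : ℕ) := by
      intro j
      simp only [hU, hD, Matrix.of_apply, if_pos (le_refl (j : ℕ))]
      split <;> simp
    rw [Matrix.det_of_lowerTriangular U hUtri, Finset.prod_congr rfl fun j _ => hdiag j,
      Fin.prod_univ_eq_prod_range D n, show n = n - 1 + 1 by omega, Finset.prod_range_succ]
    simp only [show n - 1 + 1 = n by omega]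
    rw [show D (n - 1) = 1 by rw [hD]; simp [show n - 1 + 1 = n by omega], mul_one,
      hprodW, ← Finset.prod_inv_distrib]
    refine Finset.prod_congr rfl fun j hj => ?_
    simp only [Finset.mem_range] at hj
    rw [hD]
    simp only []
    rw [if_neg (by omega), Finset.Icc_erase_right]
  have hPZne : (∏ j ∈ Finset.Icc 1 n, ∏ i ∈ Finset.Ico 1 j, (z j - z i)) ≠ 0 := by
    rw [Finset.prod_ne_zero_iff]
    intro j hj
    rw [Finset.prod_ne_zero_iff]
    intro i hi
    simp only [Finset.mem_Icc] at hj
    simp only [Finset.mem_Ico] at hi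
    exact sub_ne_zero_of_ne (hz j (Finset.mem_Icc.mpr (by omega)) i
      (Finset.mem_Icc.mpr (by omega)) (by omega))
  have hPWne : (∏ j ∈ Finset.Icc 1 (n - 1), ∏ i ∈ Finset.Ico 1 j, (w j - w i)) ≠ 0 := by
    rw [Finset.prod_ne_zero_iff]
    intro j hj
    rw [Finset.prod_ne_zero_iff]
    intro i hi
    simp only [Finset.mem_Icc] at hj
    simp only [Finset.mem_Ico] at hi
    exact sub_ne_zero_of_ne (hw j (Finset.mem_Icc.mpr (by omega)) i
      (Finset.mem_Icc.mpr (by omega)) (by omega))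
  rw [hG, Matrix.det_mul, Matrix.det_mul, Matrix.det_transpose, hdetL, hdetU]
  field_simp
end
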